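/- arXiv:0903.0518 — 9 statements merged into one kernel-verified Lean document; each statement's English description precedes it below -/
import Mathlib

section
/- Fix N ≥ 2 and t with 0 < t ≤ 2N/3. If X is a real random variable whose distribution is symmetric (invariant under x ↦ −x), unimodal at 0, supported on [−N, N], and satisfies Var(X) = 1, then P(X ≥ t) ≤ 1/2 − t/(2√3) when 0 < t ≤ 2/√3, and P(X ≥ t) ≤ 2/(9t²) when 2/√3 < t ≤ 2N/3. -/
open MeasureTheory ProbabilityTheory

def UnimodalAt (μ : Measure ℝ) (m : ℝ) : Prop :=
  ConvexOn ℝ (Set.Iio m) (fun x => (μ (Set.Iic x)).toReal) ∧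
  ConcaveOn ℝ (Set.Ioi m) (fun x => (μ (Set.Iic x)).toReal)

def SymmetricDist (μ : Measure ℝ) : Prop :=
  μ.map (fun x => -x) = μ

/-!
Let `g s = P(X ≥ s) = P(X ≤ -s)`. Symmetry and unimodality make `g` convex and antitone on
`(0, ∞)` with `g ≤ 1/2`, and the layer-cake formula turns `Var X = 1` into
`∫₀^∞ s g(s) ds = 1/4`. A tangent line `a - b s` to `g` at `t` lies below `g`; letting `s → 0`
gives `a ≤ 1/2`, and comparing moments with the triangle under it,
`∫₀^{a/b} s (a - b s) ds = a³ / (6 b²) ≤ 1/4`, gives `2 a³ ≤ 3 b²`. Maximising `g t = a - b t`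
under these two constraints yields the two bounds; `a ≤ 1/2` is the active one exactly when
`t ≤ 2/√3`.
-/

open Set Filter Topology

/-- The tangent line at `a = 1/2` of the curve `b = √(2 a³ / 3)`. -/
lemma six_mul_sub_one_le_of_two_mul_cube_le {a b : ℝ} (hb : 0 ≤ b)
    (hab : 2 * a ^ 3 ≤ 3 * b ^ 2) : 6 * a - 1 ≤ 4 * √3 * b := by
  have hrhs : 0 ≤ 4 * √3 * b := by positivity
  rcases le_or_gt (6 * a) 1 with ha | ha
  · linarith
  have hsq : (6 * a - 1) ^ 2 ≤ (4 * √3 * b) ^ 2 := by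
    have : (4 * √3 * b) ^ 2 = 48 * b ^ 2 := by
      rw [mul_pow, mul_pow, Real.sq_sqrt (by norm_num)]; ring
    -- `32 a³ - (6 a - 1)² = (2 a - 1)² (8 a - 1)`
    nlinarith [mul_nonneg (sq_nonneg (2 * a - 1)) (by linarith : (0 : ℝ) ≤ 8 * a - 1)]
  exact (pow_le_pow_iff_left₀ (by linarith) hrhs two_ne_zero).mp hsq

lemma sub_mul_le_half_sub_div {a b t : ℝ} (ha : a ≤ 1 / 2) (hb : 0 ≤ b)
    (hab : 2 * a ^ 3 ≤ 3 * b ^ 2) (ht : 0 ≤ t) (htc : t ≤ 2 / √3) :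
    a - b * t ≤ 1 / 2 - t / (2 * √3) := by
  have hr : 0 < √3 := by positivity
  have hr2 : √3 ^ 2 = 3 := Real.sq_sqrt (by norm_num)
  have htr : t * √3 ≤ 2 := by rwa [le_div_iff₀ hr] at htc
  have htangent := six_mul_sub_one_le_of_two_mul_cube_le hb hab
  have hdiv : t / (2 * √3) = t * √3 / 6 := by
    field_simp
    rw [hr2]; ring
  rw [hdiv]
  nlinarith [mul_le_mul_of_nonneg_right htangent ht,
    mul_nonneg (by linarith : 0 ≤ 2 - t * √3) (by linarith : (0 : ℝ) ≤ 1 / 2 - a)]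

lemma sub_mul_le_two_div_nine_mul_sq {a b t : ℝ} (hb : 0 ≤ b) (hab : 2 * a ^ 3 ≤ 3 * b ^ 2)
    (ht : 0 < t) : a - b * t ≤ 2 / (9 * t ^ 2) := by
  set w := 9 * b * t ^ 3 / 2 with hw_def
  have hw : 0 ≤ w := by positivity
  have hcube : (9 * a * t ^ 2) ^ 3 ≤ (2 * w + 2) ^ 3 := by
    have h54 : (9 * a * t ^ 2) ^ 3 ≤ 54 * w ^ 2 := by
      have := mul_le_mul_of_nonneg_right hab (by positivity : 0 ≤ (t ^ 2) ^ 3)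
      rw [hw_def]; ring_nf at this ⊢; linarith
    -- `(2 w + 2)³ - 54 w² = 2 (w - 2)² (4 w + 1)`
    nlinarith [mul_nonneg (sq_nonneg (w - 2)) (by linarith : 0 ≤ 4 * w + 1)]
  have hle : 9 * a * t ^ 2 ≤ 9 * b * t ^ 3 + 2 := by
    have := (Odd.pow_le_pow (by decide)).mp hcube
    rw [hw_def] at this; linarith
  rw [le_div_iff₀ (by positivity)]
  nlinarith

theorem ConvexOn.add_rightDeriv_mul_sub_le {S : Set ℝ} {f : ℝ → ℝ} (hf : ConvexOn ℝ S f)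
    {x y : ℝ} (hx : x ∈ interior S) (hy : y ∈ S) :
    f x + derivWithin f (Ioi x) x * (y - x) ≤ f y := by
  rcases lt_trichotomy y x with hyx | rfl | hxy
  · have h := (hf.slope_le_leftDeriv_of_mem_interior hy hx hyx).trans
      (hf.leftDeriv_le_rightDeriv_of_mem_interior hx)
    rw [slope_def_field, div_le_iff₀ (sub_pos.mpr hyx)] at h
    linarith
  · simp
  · have h := hf.rightDeriv_le_slope_of_mem_interior hx hy hxy
    rw [slope_def_field, le_div_iff₀ (sub_pos.mpr hxy)] at h
    linarith

lemma le_of_forall_sub_mul_le {a b c : ℝ} (h : ∀ s > 0, a - b * s ≤ c) : a ≤ c := by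
  have hlim : Tendsto (fun s : ℝ => a - b * s) (𝓝[>] 0) (𝓝 (a - b * 0)) :=
    (by fun_prop : Continuous fun s : ℝ => a - b * s).continuousWithinAt
  simpa using le_of_tendsto hlim (eventually_nhdsWithin_of_forall h)

lemma two_mul_cube_le_of_sub_mul_le_of_pos {g : ℝ → ℝ} {a b : ℝ} (hb : 0 < b)
    (hg : ∀ s > 0, a - b * s ≤ g s)
    (hmom : ∫⁻ s in Ioi 0, ENNReal.ofReal (s * g s) ≤ ENNReal.ofReal (1 / 4)) :
    2 * a ^ 3 ≤ 3 * b ^ 2 := by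
  rcases le_or_gt a 0 with ha | ha
  · nlinarith [sq_nonneg a]
  have hab : 0 < a / b := div_pos ha hb
  have hnonneg : ∀ s ∈ Ioc 0 (a / b), 0 ≤ s * (a - b * s) := fun s hs =>
    mul_nonneg hs.1.le (by linarith [(le_div_iff₀' hb).mp hs.2])
  have hval : ∫ s in (0 : ℝ)..a / b, s * (a - b * s) = a ^ 3 / (6 * b ^ 2) := by
    have hpoly : (fun s : ℝ => s * (a - b * s)) = fun s => a * s - b * s ^ 2 := by
      ext s; ring
    rw [hpoly, intervalIntegral.integral_sub (Continuous.intervalIntegrable (by fun_prop) _ _)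
      (Continuous.intervalIntegrable (by fun_prop) _ _),
      intervalIntegral.integral_const_mul, intervalIntegral.integral_const_mul, integral_id,
      integral_pow]
    have hb0 : b ≠ 0 := hb.ne'
    simp only [Nat.reduceAdd, Nat.cast_ofNat]
    field_simp
    ring
  have hle : ENNReal.ofReal (a ^ 3 / (6 * b ^ 2)) ≤ ENNReal.ofReal (1 / 4) :=
    calc ENNReal.ofReal (a ^ 3 / (6 * b ^ 2))
        = ∫⁻ s in Ioc 0 (a / b), ENNReal.ofReal (s * (a - b * s)) := by
          rw [← hval, intervalIntegral.integral_of_le hab.le,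
            ofReal_integral_eq_lintegral_ofReal
              (by fun_prop : Continuous fun s : ℝ => s * (a - b * s)).integrableOn_Ioc
              ((ae_restrict_iff' measurableSet_Ioc).2 (ae_of_all _ hnonneg))]
      _ ≤ ∫⁻ s in Ioc 0 (a / b), ENNReal.ofReal (s * g s) :=
          setLIntegral_mono' measurableSet_Ioc fun s hs =>
            ENNReal.ofReal_le_ofReal (mul_le_mul_of_nonneg_left (hg s hs.1) hs.1.le)
      _ ≤ ∫⁻ s in Ioi 0, ENNReal.ofReal (s * g s) := lintegral_mono_set Ioc_subset_Ioi_self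
      _ ≤ ENNReal.ofReal (1 / 4) := hmom
  rw [ENNReal.ofReal_le_ofReal_iff (by norm_num), div_le_iff₀ (by positivity)] at hle
  linarith

/-- The case `b = 0` is reached as a limit of the positive slopes `c > b`. -/
lemma two_mul_cube_le_of_sub_mul_le {g : ℝ → ℝ} {a b : ℝ} (hb : 0 ≤ b)
    (hg : ∀ s > 0, a - b * s ≤ g s)
    (hmom : ∫⁻ s in Ioi 0, ENNReal.ofReal (s * g s) ≤ ENNReal.ofReal (1 / 4)) :
    2 * a ^ 3 ≤ 3 * b ^ 2 := by
  have hlim : Tendsto (fun c : ℝ => 3 * c ^ 2) (𝓝[>] b) (𝓝 (3 * b ^ 2)) :=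
    (by fun_prop : Continuous fun c : ℝ => 3 * c ^ 2).continuousWithinAt
  refine ge_of_tendsto hlim (eventually_nhdsWithin_of_forall fun c (hc : b < c) => ?_)
  refine two_mul_cube_le_of_sub_mul_le_of_pos (hb.trans_lt hc) (fun s hs => ?_) hmom
  nlinarith [hg s hs]

theorem exists_tangent_bounds_of_convexOn {g : ℝ → ℝ} (hconv : ConvexOn ℝ (Ioi 0) g)
    (hanti : AntitoneOn g (Ioi 0)) (hhalf : ∀ s > 0, g s ≤ 1 / 2)
    (hmom : ∫⁻ s in Ioi 0, ENNReal.ofReal (s * g s) ≤ ENNReal.ofReal (1 / 4))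
    {t : ℝ} (ht : 0 < t) :
    ∃ a b : ℝ, 0 ≤ b ∧ a ≤ 1 / 2 ∧ 2 * a ^ 3 ≤ 3 * b ^ 2 ∧ g t = a - b * t := by
  have ht' : t ∈ interior (Ioi (0 : ℝ)) := by rwa [interior_Ioi]
  have ht1 : t + 1 ∈ Ioi (0 : ℝ) := mem_Ioi.mpr (by linarith)
  set b := -derivWithin g (Ioi t) t
  have hb : 0 ≤ b := by
    have hslope := hconv.rightDeriv_le_slope_of_mem_interior ht' ht1 (lt_add_one t)
    have hdecr := hanti ht ht1 (lt_add_one t).le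
    rw [slope_def_field, add_sub_cancel_left, div_one] at hslope
    linarith
  have htangent : ∀ s > 0, (g t + b * t) - b * s ≤ g s := fun s hs => by
    have := hconv.add_rightDeriv_mul_sub_le ht' hs
    linarith
  refine ⟨g t + b * t, b, hb, ?_, two_mul_cube_le_of_sub_mul_le hb htangent hmom, by ring⟩
  exact le_of_forall_sub_mul_le fun s hs => (htangent s hs).trans (hhalf s hs)

namespace SymmetricDist

variable {μ : Measure ℝ}

lemma measure_Ici (h : SymmetricDist μ) (s : ℝ) : μ (Ici s) = μ (Iic (-s)) := by
  conv_lhs => rw [← h]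
  rw [Measure.map_apply measurable_neg measurableSet_Ici]
  congr 1
  ext x
  simp

lemma integral_id_eq_zero (h : SymmetricDist μ) : ∫ x, x ∂μ = 0 := by
  have hneg : ∫ x, x ∂μ = -∫ x, x ∂μ := by
    conv_lhs => rw [← h]
    rw [integral_map (φ := fun x : ℝ => -x) measurable_neg.aemeasurable (f := fun x => x)
      aestronglyMeasurable_id, integral_neg]
  linarith

lemma evariance_id (h : SymmetricDist μ) :
    evariance id μ = ∫⁻ x, ENNReal.ofReal (x ^ 2) ∂μ := by
  simp only [evariance, id, h.integral_id_eq_zero, sub_zero, Real.enorm_eq_ofReal_abs]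
  congr with x
  rw [← ENNReal.ofReal_pow (abs_nonneg x), sq_abs]

lemma lintegral_sq (h : SymmetricDist μ) :
    ∫⁻ x, ENNReal.ofReal (x ^ 2) ∂μ = 4 * ∫⁻ s in Ioi 0, ENNReal.ofReal s * μ (Ici s) := by
  have hrpow : ∀ x : ℝ, ENNReal.ofReal (x ^ 2) = ENNReal.ofReal (|x| ^ (2 : ℝ)) := fun x => by
    rw [Real.rpow_two, sq_abs]
  rw [lintegral_congr hrpow, lintegral_rpow_eq_lintegral_meas_le_mul μ
    (ae_of_all _ fun x => abs_nonneg x) continuous_abs.measurable.aemeasurable two_pos]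
  have htail : ∀ t ∈ Ioi (0 : ℝ), μ {x | t ≤ |x|} * ENNReal.ofReal (t ^ ((2 : ℝ) - 1))
      = 2 * (ENNReal.ofReal t * μ (Ici t)) := fun t (ht : 0 < t) => by
    have hunion : {x : ℝ | t ≤ |x|} = Iic (-t) ∪ Ici t := by
      ext x; simp [le_abs', or_comm]
    rw [hunion, measure_union (Iic_disjoint_Ici.mpr (by linarith)) measurableSet_Ici,
      ← h.measure_Ici, ← two_mul, show (2 : ℝ) - 1 = 1 by norm_num, Real.rpow_one]
    ring
  rw [setLIntegral_congr_fun measurableSet_Ioi htail, lintegral_const_mul' _ _ (by simp),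
    ← mul_assoc]
  norm_num

lemma measure_Ici_le_half [IsProbabilityMeasure μ] (h : SymmetricDist μ) {s : ℝ}
    (hs : 0 < s) : (μ (Ici s)).toReal ≤ 1 / 2 := by
  have hdisj : Disjoint (Iic (-s)) (Ici s) := Iic_disjoint_Ici.mpr (by linarith)
  have h1 : μ.real (Iic (-s)) + μ.real (Ici s) ≤ 1 := by
    rw [← measureReal_union hdisj measurableSet_Ici]
    exact measureReal_le_one
  rw [measureReal_def, measureReal_def, ← h.measure_Ici] at h1
  linarith

lemma convexOn_measure_Ici (h : SymmetricDist μ)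
    (hF : ConvexOn ℝ (Iio 0) fun x => (μ (Iic x)).toReal) :
    ConvexOn ℝ (Ioi 0) fun s => (μ (Ici s)).toReal := by
  have hpre : (-LinearMap.id : ℝ →ₗ[ℝ] ℝ) ⁻¹' Iio 0 = Ioi 0 := by ext; simp
  have := hF.comp_linearMap (-LinearMap.id)
  rw [hpre] at this
  simpa [Function.comp_def, h.measure_Ici] using this

theorem exists_tangent_bounds [IsProbabilityMeasure μ] (hsymm : SymmetricDist μ)
    (huni : UnimodalAt μ 0) (hvar : variance id μ = 1) {t : ℝ} (ht : 0 < t) :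
    ∃ a b : ℝ, 0 ≤ b ∧ a ≤ 1 / 2 ∧ 2 * a ^ 3 ≤ 3 * b ^ 2 ∧ (μ (Ici t)).toReal = a - b * t := by
  have hsecond : (∫⁻ s in Ioi 0, ENNReal.ofReal s * μ (Ici s)) * 4 = 1 := by
    rw [mul_comm, ← hsymm.lintegral_sq, ← hsymm.evariance_id, ← ENNReal.toReal_eq_one_iff]
    exact hvar
  have hmom : ∫⁻ s in Ioi 0, ENNReal.ofReal (s * (μ (Ici s)).toReal)
      = ∫⁻ s in Ioi 0, ENNReal.ofReal s * μ (Ici s) := by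
    congr with s
    rw [ENNReal.ofReal_mul' ENNReal.toReal_nonneg, ENNReal.ofReal_toReal (measure_ne_top _ _)]
  refine exists_tangent_bounds_of_convexOn (hsymm.convexOn_measure_Ici huni.1)
    (fun s _ u _ hsu => ENNReal.toReal_mono (measure_ne_top _ _)
      (measure_mono (Ici_subset_Ici.mpr hsu)))
    (fun s hs => hsymm.measure_Ici_le_half hs) ?_ ht
  rw [hmom, ENNReal.eq_inv_of_mul_eq_one_left hsecond, one_div,
    ENNReal.ofReal_inv_of_pos four_pos, ENNReal.ofReal_ofNat]

end SymmetricDist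

theorem stmt_1_general {Ω : Type*} {mΩ : MeasurableSpace Ω} (P : Measure Ω)
    [IsProbabilityMeasure P] (X : Ω → ℝ) (hX : Measurable X)
    (t : ℝ) (ht : 0 < t)
    (hsymm : SymmetricDist (P.map X)) (huni : UnimodalAt (P.map X) 0)
    (hvar : variance X P = 1) :
    (t ≤ 2 / Real.sqrt 3 →
      (P {ω | t ≤ X ω}).toReal ≤ 1 / 2 - t / (2 * Real.sqrt 3)) ∧
    (2 / Real.sqrt 3 < t →
      (P {ω | t ≤ X ω}).toReal ≤ 2 / (9 * t ^ 2)) := by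
  have : IsProbabilityMeasure (P.map X) := Measure.isProbabilityMeasure_map hX.aemeasurable
  have hvar' : variance id (P.map X) = 1 := by
    rwa [variance_map aemeasurable_id hX.aemeasurable]
  obtain ⟨a, b, hb, ha, hab, htail⟩ := hsymm.exists_tangent_bounds huni hvar' ht
  have hprob : (P {ω | t ≤ X ω}).toReal = a - b * t := by
    rw [← htail, Measure.map_apply hX measurableSet_Ici]
    rfl
  rw [hprob]
  exact ⟨fun htc => sub_mul_le_half_sub_div ha hb hab ht.le htc,
    fun _ => sub_mul_le_two_div_nine_mul_sq hb hab ht⟩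

theorem stmt_1 {Ω : Type*} {mΩ : MeasurableSpace Ω} (P : Measure Ω)
    [IsProbabilityMeasure P] (X : Ω → ℝ) (hX : Measurable X)
    (N t : ℝ) (hN : 2 ≤ N) (ht : 0 < t) (htN : t ≤ 2 * N / 3)
    (hsymm : SymmetricDist (P.map X)) (huni : UnimodalAt (P.map X) 0)
    (hsupp : (P.map X) (Set.Icc (-N) N)ᶜ = 0)
    (hvar : variance X P = 1) :
    (t ≤ 2 / Real.sqrt 3 →
      (P {ω | t ≤ X ω}).toReal ≤ 1 / 2 - t / (2 * Real.sqrt 3)) ∧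
    (2 / Real.sqrt 3 < t →
      (P {ω | t ≤ X ω}).toReal ≤ 2 / (9 * t ^ 2)) :=
  stmt_1_general (mΩ := mΩ) P X hX t ht hsymm huni hvar
end

section
/- Fix t ≥ 2/√3 and set β_t = 4/(3t²). Let X have the mixture distribution (1−β_t)·δ₀ + β_t·(uniform distribution on (−3t/2, 3t/2)), i.e., its absolutely continuous part has density β_t/(3t) on (−3t/2, 3t/2). Then X has a symmetric distribution that is unimodal at 0 with Var(X) = 1, and P(X ≥ t) = 2/(9t²). -/
/-!
Write `L = 3t/2` and `b = β_t/(3t)`, so that the law is `(1 - β_t) δ₀ + b · Leb|(-L, L)`.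
Reflection fixes both parts, so the law is symmetric and centred. Its CDF is `b (x + L)⁺` left
of `0` and `(1 - β_t) + b min(x + L, 2L)` right of `0`: a maximum, resp. a minimum, of affine
functions. The variance is `b · 2L³/3 = 1`, and `P(X ≥ t) = b (L - t) = β_t / 6`.
-/

open MeasureTheory ProbabilityTheory

open Set

theorem SymmetricDist.integral_id_eq_zero_s3 {μ : Measure ℝ} (hμ : SymmetricDist μ) :
    ∫ x, x ∂μ = 0 := by
  have h : ∫ x, x ∂μ = -∫ x, x ∂μ := by
    conv_lhs => rw [← hμ]
    rw [integral_map (f := fun x => x) measurable_neg.aemeasurable aestronglyMeasurable_id,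
      integral_neg]
  linarith

theorem map_neg_volume_restrict_Ioo (L : ℝ) :
    (volume.restrict (Ioo (-L) L)).map (fun x : ℝ => -x) = volume.restrict (Ioo (-L) L) := by
  have hpre : (fun x : ℝ => -x) ⁻¹' Ioo (-L) L = Ioo (-L) L := by
    change -Ioo (-L) L = _
    rw [neg_Ioo, neg_neg]
  nth_rewrite 1 [← hpre]
  rw [← Measure.restrict_map measurable_neg measurableSet_Ioo, Measure.map_neg_eq_self]

instance isFiniteMeasure_ofReal_smul {α : Type*} [MeasurableSpace α] (c : ℝ) (μ : Measure α)
    [IsFiniteMeasure μ] : IsFiniteMeasure (ENNReal.ofReal c • μ) :=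
  μ.smul_finite ENNReal.ofReal_ne_top

noncomputable def atomPlusUniform (a b L : ℝ) : Measure ℝ :=
  ENNReal.ofReal a • Measure.dirac 0 + ENNReal.ofReal b • volume.restrict (Ioo (-L) L)

namespace atomPlusUniform

variable {a b L : ℝ}

theorem symmetricDist (a b L : ℝ) : SymmetricDist (atomPlusUniform a b L) := by
  rw [SymmetricDist, atomPlusUniform, Measure.map_add _ _ measurable_neg, Measure.map_smul,
    Measure.map_smul, Measure.map_dirac' measurable_neg, map_neg_volume_restrict_Ioo, neg_zero]

theorem real_Iic (ha : 0 ≤ a) (hb : 0 ≤ b) (x : ℝ) :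
    (atomPlusUniform a b L).real (Iic x) =
      (if 0 ≤ x then a else 0) + b * max (min x L + L) 0 := by
  rw [atomPlusUniform, Measure.restrict_congr_set Ioo_ae_eq_Ioc, measureReal_add_apply,
    measureReal_ennreal_smul_apply, measureReal_ennreal_smul_apply,
    measureReal_restrict_apply measurableSet_Iic, inter_comm, Ioc_inter_Iic, Real.volume_real_Ioc,
    ENNReal.toReal_ofReal ha, ENNReal.toReal_ofReal hb, sub_neg_eq_add, min_comm]
  by_cases hx : 0 ≤ x <;> simp [measureReal_def, hx]

theorem unimodalAt (ha : 0 ≤ a) (hb : 0 ≤ b) (hL : 0 ≤ L) :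
    UnimodalAt (atomPlusUniform a b L) 0 := by
  constructor
  · have h : ConvexOn ℝ (Iio 0) fun x : ℝ => b • (max (x + L) 0) :=
      (((convexOn_id (convex_Iio 0)).add_const L).sup (convexOn_const 0 (convex_Iio 0))).smul hb
    refine h.congr fun x (hx : x < 0) => ?_
    simp only [← measureReal_def, real_Iic ha hb, smul_eq_mul, if_neg hx.not_ge,
      min_eq_left (hx.le.trans hL), zero_add]
  · have h : ConcaveOn ℝ (Ioi 0) fun x : ℝ => b • (min (x + L) (L + L)) + a :=
      ((((concaveOn_id (convex_Ioi 0)).add_const L).inf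
        (concaveOn_const (L + L) (convex_Ioi 0))).smul hb).add_const a
    refine h.congr fun x (hx : 0 < x) => ?_
    simp only [← measureReal_def, real_Iic ha hb, smul_eq_mul, if_pos hx.le]
    rw [max_eq_left (by positivity), min_add_add_right, add_comm]

theorem integral_sq (hb : 0 ≤ b) (hL : 0 ≤ L) :
    ∫ x, x ^ 2 ∂(atomPlusUniform a b L) = 2 * b * L ^ 3 / 3 := by
  have hdirac : Integrable (fun x : ℝ => x ^ 2) (Measure.dirac 0) := integrable_dirac (by simp)
  have hunif : Integrable (fun x : ℝ => x ^ 2) (volume.restrict (Ioo (-L) L)) :=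
    (continuous_pow 2).integrableOn_Icc.mono_set Ioo_subset_Icc_self
  rw [atomPlusUniform, integral_add_measure (hdirac.smul_measure ENNReal.ofReal_ne_top)
    (hunif.smul_measure ENNReal.ofReal_ne_top), integral_smul_measure, integral_smul_measure,
    integral_dirac, ← integral_Ioc_eq_integral_Ioo, ← intervalIntegral.integral_of_le (by linarith),
    integral_pow, ENNReal.toReal_ofReal hb]
  simp only [smul_eq_mul]
  ring

theorem variance_id (hb : 0 ≤ b) (hL : 0 ≤ L) :
    variance id (atomPlusUniform a b L) = 2 * b * L ^ 3 / 3 :=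
  (variance_of_integral_eq_zero aemeasurable_id (symmetricDist a b L).integral_id_eq_zero_s3).trans
    (integral_sq hb hL)

theorem real_Ici (hb : 0 ≤ b) {s : ℝ} (hs : 0 < s) (hsL : s ≤ L) :
    (atomPlusUniform a b L).real (Ici s) = b * (L - s) := by
  have hinter : Ici s ∩ Ioo (-L) L = Ico s L := by
    ext y
    simp only [mem_inter_iff, mem_Ici, mem_Ioo, mem_Ico]
    constructor
    · rintro ⟨h1, -, h3⟩; exact ⟨h1, h3⟩
    · rintro ⟨h1, h2⟩; exact ⟨h1, by linarith, h2⟩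
  rw [atomPlusUniform, measureReal_add_apply, measureReal_ennreal_smul_apply,
    measureReal_ennreal_smul_apply, measureReal_restrict_apply measurableSet_Ici, hinter,
    Real.volume_real_Ico_of_le hsL, ENNReal.toReal_ofReal hb]
  simp [measureReal_def, hs]

end atomPlusUniform

theorem stmt_3_general {Ω : Type*} {mΩ : MeasurableSpace Ω} (P : Measure Ω)
    (X : Ω → ℝ) (hX : Measurable X)
    (t : ℝ) (ht : 2 / Real.sqrt 3 ≤ t)
    (hlaw : P.map X = ENNReal.ofReal (1 - 4 / (3 * t ^ 2)) • Measure.dirac 0 +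
      ENNReal.ofReal (4 / (3 * t ^ 2)) • (ENNReal.ofReal (3 * t))⁻¹ •
        volume.restrict (Set.Ioo (-(3 * t / 2)) (3 * t / 2))) :
    SymmetricDist (P.map X) ∧ UnimodalAt (P.map X) 0 ∧ variance X P = 1 ∧
    (P {ω | t ≤ X ω}).toReal = 2 / (9 * t ^ 2) := by
  have ht0 : 0 < t := (by positivity : (0 : ℝ) < 2 / Real.sqrt 3).trans_le ht
  have hβ1 : 4 / (3 * t ^ 2) ≤ 1 := by
    have h : 4 / 3 ≤ t ^ 2 :=
      calc (4 : ℝ) / 3 = (2 / Real.sqrt 3) ^ 2 := by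
            rw [div_pow, Real.sq_sqrt zero_le_three]; norm_num
        _ ≤ t ^ 2 := by gcongr
    rw [div_le_one (by positivity)]
    linarith
  set β := 4 / (3 * t ^ 2) with hβ
  have hμ : P.map X = atomPlusUniform (1 - β) (β / (3 * t)) (3 * t / 2) := by
    rw [hlaw, atomPlusUniform, smul_smul, ← ENNReal.ofReal_inv_of_pos (by positivity),
      ← ENNReal.ofReal_mul (by positivity), div_eq_mul_inv β]
  have ha : 0 ≤ 1 - β := sub_nonneg.2 hβ1
  have hb : 0 ≤ β / (3 * t) := by positivity
  have hL : 0 ≤ 3 * t / 2 := by positivity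
  refine ⟨hμ ▸ atomPlusUniform.symmetricDist .., hμ ▸ atomPlusUniform.unimodalAt ha hb hL, ?_, ?_⟩
  · have hvar : variance X P = variance id (P.map X) :=
      (variance_map aemeasurable_id hX.aemeasurable).symm
    rw [hvar, hμ, atomPlusUniform.variance_id hb hL, hβ]
    field_simp
    ring
  · rw [← measureReal_def, show {ω | t ≤ X ω} = X ⁻¹' Ici t from rfl,
      ← map_measureReal_apply hX measurableSet_Ici, hμ,
      atomPlusUniform.real_Ici hb ht0 (by linarith), hβ]
    field_simp
    ring

theorem stmt_3 {Ω : Type*} {mΩ : MeasurableSpace Ω} (P : Measure Ω)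
    [IsProbabilityMeasure P] (X : Ω → ℝ) (hX : Measurable X)
    (t : ℝ) (ht : 2 / Real.sqrt 3 ≤ t)
    (hlaw : P.map X = ENNReal.ofReal (1 - 4 / (3 * t ^ 2)) • Measure.dirac 0 +
      ENNReal.ofReal (4 / (3 * t ^ 2)) • (ENNReal.ofReal (3 * t))⁻¹ •
        volume.restrict (Set.Ioo (-(3 * t / 2)) (3 * t / 2))) :
    SymmetricDist (P.map X) ∧ UnimodalAt (P.map X) 0 ∧ variance X P = 1 ∧
    (P {ω | t ≤ X ω}).toReal = 2 / (9 * t ^ 2) :=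
  stmt_3_general (mΩ := mΩ) P X hX t ht hlaw
end

section
/- Let X ≥ 0 almost surely be a real random variable whose distribution is unimodal at 0, with mean μ_X and Var(X) = 1. Then for every t > 0: P(X > t) ≤ 1 − t/(√3·(1 + μ_X²)^{1/2}) if 0 < t < 2(1 + μ_X²)^{1/2}/√3, and P(X > t) ≤ 4(1 + μ_X²)/(9t²) if t ≥ 2(1 + μ_X²)^{1/2}/√3. -/
open MeasureTheory ProbabilityTheory

/-!
The survival function `G u = P(X > u)` is convex on `(0, ∞)` by unimodality, so its tangent line
`u ↦ b - r u` at `t` (with `r ≥ 0`, `b = G t + r t`) lies below `G` there. Since `G ≤ 1`, letting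
`u → 0⁺` gives `b ≤ 1`; and by the layer-cake formula
`E X² = ∫₀^∞ 2u G(u) du ≥ ∫₀^{b/r} 2u (b - r u) du = b³ / (3 r²)`.
Both bounds are then elementary maximizations of `G t = b - r t` under the constraints
`b ≤ 1` and `b³ ≤ 3 r² E X²`, where `E X² = Var X + (E X)² = 1 + m²`.
-/

open Set Filter Topology

namespace ConvexOn

variable {S : Set ℝ} {f : ℝ → ℝ} {x y : ℝ}

lemma add_rightDeriv_mul_sub_le_s8 (hf : ConvexOn ℝ S f) (hx : x ∈ interior S) (hy : y ∈ S) :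
    f x + derivWithin f (Ioi x) x * (y - x) ≤ f y := by
  rcases lt_trichotomy y x with hyx | rfl | hxy
  · have h := (hf.slope_le_leftDeriv_of_mem_interior hy hx hyx).trans
      (hf.leftDeriv_le_rightDeriv_of_mem_interior hx)
    rw [slope_def_field, div_le_iff₀ (sub_pos.2 hyx)] at h
    linarith
  · simp
  · have h := hf.rightDeriv_le_slope_of_mem_interior hx hy hxy
    rw [slope_def_field, le_div_iff₀ (sub_pos.2 hxy)] at h
    linarith

end ConvexOn

lemma UnimodalAt.convexOn_measureReal_Ioi {μ : Measure ℝ} [IsProbabilityMeasure μ] {m : ℝ}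
    (h : UnimodalAt μ m) : ConvexOn ℝ (Ioi m) fun u => μ.real (Ioi u) := by
  refine (h.2.neg.add_const 1).congr fun u _ => ?_
  simp only [Pi.add_apply, Pi.neg_apply]
  rw [← compl_Iic, probReal_compl_eq_one_sub measurableSet_Iic, measureReal_def]
  ring

lemma lintegral_ofReal_sq_eq_lintegral_meas_Ioi_mul {μ : Measure ℝ} (hpos : ∀ᵐ x ∂μ, 0 ≤ x) :
    ∫⁻ x, ENNReal.ofReal (x ^ 2) ∂μ = ∫⁻ u in Ioi 0, μ (Ioi u) * ENNReal.ofReal (2 * u) := by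
  have h := lintegral_comp_eq_lintegral_meas_lt_mul μ hpos aemeasurable_id
    (g := fun u => 2 * u) (fun r _ => (continuous_const.mul continuous_id).intervalIntegrable 0 r)
    (ae_restrict_of_forall_mem measurableSet_Ioi fun u (hu : 0 < u) => by positivity)
  convert h using 4 with x
  · rw [intervalIntegral.integral_const_mul, integral_id]
    ring
  · rfl

lemma intervalIntegral_two_mul_le_integral_sq {μ : Measure ℝ} [IsFiniteMeasure μ]
    (hpos : ∀ᵐ x ∂μ, 0 ≤ x) (hint : Integrable (fun x => x ^ 2) μ) {ℓ : ℝ → ℝ}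
    (hℓ : Continuous ℓ) {c : ℝ} (hc : 0 ≤ c) (hℓ0 : ∀ u ∈ Ioo 0 c, 0 ≤ ℓ u)
    (hℓμ : ∀ u ∈ Ioo 0 c, ℓ u ≤ μ.real (Ioi u)) :
    ∫ u in 0..c, 2 * u * ℓ u ≤ ∫ x, x ^ 2 ∂μ := by
  have hnn : ∀ u ∈ Ioo 0 c, 0 ≤ 2 * u * ℓ u := fun u hu => by
    have := hℓ0 u hu
    have := hu.1
    positivity
  rw [intervalIntegral.integral_of_le hc, integral_Ioc_eq_integral_Ioo,
    ← ENNReal.ofReal_le_ofReal_iff (integral_nonneg fun x => sq_nonneg x),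
    ofReal_integral_eq_lintegral_ofReal
      ((by fun_prop : Continuous fun u => 2 * u * ℓ u).integrableOn_Icc.mono_set
        Ioo_subset_Icc_self)
      (ae_restrict_of_forall_mem measurableSet_Ioo hnn),
    ofReal_integral_eq_lintegral_ofReal hint (ae_of_all _ fun x => sq_nonneg x),
    lintegral_ofReal_sq_eq_lintegral_meas_Ioi_mul hpos]
  calc ∫⁻ u in Ioo 0 c, ENNReal.ofReal (2 * u * ℓ u)
      ≤ ∫⁻ u in Ioo 0 c, μ (Ioi u) * ENNReal.ofReal (2 * u) := by
        refine setLIntegral_mono' measurableSet_Ioo fun u hu => ?_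
        rw [mul_comm (2 * u), ENNReal.ofReal_mul (hℓ0 u hu)]
        exact mul_le_mul_left (ENNReal.ofReal_le_of_le_toReal (hℓμ u hu)) _
    _ ≤ _ := lintegral_mono_set Ioo_subset_Ioi_self

lemma integral_two_mul_affine (b r c : ℝ) :
    ∫ u in 0..c, 2 * u * (b - r * u) = b * c ^ 2 - 2 * r / 3 * c ^ 3 := by
  have : (fun u : ℝ => 2 * u * (b - r * u)) = fun u => 2 * b * u - 2 * r * u ^ 2 := by
    ext u; ring
  rw [this, intervalIntegral.integral_sub ((by fun_prop : Continuous _).intervalIntegrable _ _)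
      ((by fun_prop : Continuous _).intervalIntegrable _ _),
    intervalIntegral.integral_const_mul, intervalIntegral.integral_const_mul, integral_id,
    integral_pow]
  push_cast
  ring

lemma cube_le_of_forall_le {b r T : ℝ} (hb : 0 ≤ b) (hr : 0 ≤ r) (hT : 0 ≤ T)
    (h : ∀ c > 0, (∀ u ∈ Ioo 0 c, 0 ≤ b - r * u) → b * c ^ 2 - 2 * r / 3 * c ^ 3 ≤ T) :
    b ^ 3 ≤ 3 * r ^ 2 * T := by
  rcases hb.eq_or_lt with rfl | hb
  · rw [zero_pow three_ne_zero]
    positivity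
  rcases hr.eq_or_lt with rfl | hr
  · have hc := h (√((T + 1) / b)) (by positivity) fun u _ => by linarith
    rw [Real.sq_sqrt (by positivity), mul_div_cancel₀ _ hb.ne'] at hc
    linarith
  · have hc := h (b / r) (by positivity) fun u hu => by
      have := (lt_div_iff₀ hr).1 hu.2
      linarith
    have : b * (b / r) ^ 2 - 2 * r / 3 * (b / r) ^ 3 = b ^ 3 / (3 * r ^ 2) := by
      field_simp
      ring
    rwa [this, div_le_iff₀ (by positivity), mul_comm] at hc

lemma le_one_sub_div_of_cube_le {a r t k : ℝ} (ha : 0 ≤ a) (hr : 0 ≤ r) (hk : 0 < k)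
    (ht : 0 < t) (htk : 3 * t ≤ 2 * k) (h1 : a + r * t ≤ 1)
    (h3 : (a + r * t) ^ 3 ≤ (k * r) ^ 2) :
    a ≤ 1 - t / k := by
  set q := √(a + r * t)
  have hq0 : 0 ≤ q := Real.sqrt_nonneg _
  have hq2 : q ^ 2 = a + r * t := Real.sq_sqrt (by positivity)
  have hq1 : q ≤ 1 := Real.sqrt_le_one.2 h1
  have hq3 : q ^ 3 ≤ k * r := by
    refine (pow_le_pow_iff_left₀ (by positivity) (by positivity) two_ne_zero).1 ?_
    rw [← pow_mul, mul_comm, pow_mul, hq2]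
    exact h3
  have hka : k * a = k * q ^ 2 - k * r * t := by rw [hq2]; ring
  -- this is `3 (k (1 - q²) - t (1 - q³))`, written so that it is visibly nonnegative
  have hpoly :
      0 ≤ (1 - q) * ((2 * k - 3 * t) * (1 + q + q ^ 2)) + (1 - q) ^ 2 * (k * (1 + 2 * q)) :=
    add_nonneg (mul_nonneg (sub_nonneg.2 hq1) (mul_nonneg (by linarith) (by positivity)))
      (mul_nonneg (sq_nonneg _) (by positivity))
  rw [le_sub_iff_add_le, ← le_sub_iff_add_le', div_le_iff₀ hk]
  nlinarith [mul_le_mul_of_nonneg_right hq3 ht.le]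

lemma mul_sq_le_of_cube_le {a r t T : ℝ} (ha : 0 ≤ a) (hr : 0 ≤ r) (ht : 0 ≤ t)
    (hT : 0 ≤ T) (h : (a + r * t) ^ 3 ≤ 3 * r ^ 2 * T) : 9 * t ^ 2 * a ≤ 4 * T := by
  have hamgm : 27 * a * (r * t) ^ 2 ≤ 4 * (a + r * t) ^ 3 := by
    nlinarith [mul_nonneg (sq_nonneg (r * t - 2 * a)) (by positivity : 0 ≤ 4 * (r * t) + a)]
  rcases hr.eq_or_lt with rfl | hr
  · have : a ≤ 0 := (Odd.pow_nonpos_iff (n := 3) ⟨1, rfl⟩).1 (by simpa using h)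
    nlinarith
  · have : r ^ 2 * (9 * t ^ 2 * a) ≤ r ^ 2 * (4 * T) := by nlinarith
    exact le_of_mul_le_mul_left this (by positivity)

theorem exists_cube_le_of_convexOn_measureReal_Ioi {μ : Measure ℝ} [IsProbabilityMeasure μ]
    (hpos : ∀ᵐ x ∂μ, 0 ≤ x) (hconv : ConvexOn ℝ (Ioi 0) fun u => μ.real (Ioi u))
    (hint : Integrable (fun x => x ^ 2) μ) {t : ℝ} (ht : 0 < t) :
    ∃ r ≥ 0, μ.real (Ioi t) + r * t ≤ 1 ∧
      (μ.real (Ioi t) + r * t) ^ 3 ≤ 3 * r ^ 2 * ∫ x, x ^ 2 ∂μ := by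
  set G : ℝ → ℝ := fun u => μ.real (Ioi u)
  set s := derivWithin G (Ioi t) t
  have ht' : t ∈ interior (Ioi (0 : ℝ)) := by rwa [interior_Ioi]
  have htangent : ∀ u > 0, G t + s * (u - t) ≤ G u := fun u hu =>
    hconv.add_rightDeriv_mul_sub_le_s8 ht' hu
  have hs : s ≤ 0 := by
    refine (hconv.rightDeriv_le_slope_of_mem_interior ht' (mem_Ioi.2 (by linarith))
      (lt_add_one t)).trans ?_
    rw [slope_def_field]
    exact div_nonpos_of_nonpos_of_nonneg
      (sub_nonpos.2 (measureReal_mono (Ioi_subset_Ioi (by linarith)))) (by linarith)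
  refine ⟨-s, by linarith, ?_, ?_⟩
  · have hline : Tendsto (fun u => G t + s * (u - t)) (𝓝[>] 0) (𝓝 (G t + -s * t)) :=
      tendsto_nhdsWithin_of_tendsto_nhds (Continuous.tendsto' (by fun_prop) _ _ (by ring))
    exact le_of_tendsto hline
      (eventually_nhdsWithin_of_forall fun u hu => (htangent u hu).trans measureReal_le_one)
  · refine cube_le_of_forall_le (add_nonneg measureReal_nonneg (by nlinarith)) (by linarith)
      (integral_nonneg fun x => sq_nonneg x) fun c hc hℓ => ?_
    rw [← integral_two_mul_affine]
    exact intervalIntegral_two_mul_le_integral_sq hpos hint (by fun_prop) hc.le hℓ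
      fun u hu => by linarith [htangent u hu.1]

theorem stmt_8 {Ω : Type*} {mΩ : MeasurableSpace Ω} (P : Measure Ω)
    [IsProbabilityMeasure P] (X : Ω → ℝ) (hX : Measurable X)
    (hpos : ∀ᵐ ω ∂P, 0 ≤ X ω)
    (huni : UnimodalAt (P.map X) 0) (hvar : variance X P = 1)
    (m : ℝ) (hm : m = ∫ ω, X ω ∂P) (t : ℝ) (ht : 0 < t) :
    (t < 2 * Real.sqrt (1 + m ^ 2) / Real.sqrt 3 →
      (P {ω | t < X ω}).toReal ≤
        1 - t / (Real.sqrt 3 * Real.sqrt (1 + m ^ 2))) ∧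
    (2 * Real.sqrt (1 + m ^ 2) / Real.sqrt 3 ≤ t →
      (P {ω | t < X ω}).toReal ≤ 4 * (1 + m ^ 2) / (9 * t ^ 2)) := by
  set ν := P.map X
  have : IsProbabilityMeasure ν := Measure.isProbabilityMeasure_map hX.aemeasurable
  have hνpos : ∀ᵐ x ∂ν, 0 ≤ x := (ae_map_iff hX.aemeasurable measurableSet_Ici).2 hpos
  have hvarν : variance id ν = 1 := by rw [variance_id_map hX.aemeasurable, hvar]
  have hmem : MemLp id 2 ν :=
    memLp_two_of_variance_ne_zero aestronglyMeasurable_id (by rw [hvarν]; exact one_ne_zero)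
  have hsecond : ∫ x, x ^ 2 ∂ν = 1 + m ^ 2 := by
    have h := variance_eq_sub hmem
    rw [hvarν, integral_map hX.aemeasurable aestronglyMeasurable_id] at h
    simp only [Pi.pow_apply, id, ← hm] at h
    linarith
  have htail : (P {ω | t < X ω}).toReal = ν.real (Ioi t) := by
    rw [measureReal_def, Measure.map_apply hX measurableSet_Ioi]
    rfl
  obtain ⟨r, hr, h1, h3⟩ :=
    exists_cube_le_of_convexOn_measureReal_Ioi hνpos huni.convexOn_measureReal_Ioi
      hmem.integrable_sq ht
  rw [hsecond] at h3
  rw [htail]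
  have h3pos : 0 < √3 := by positivity
  have hk : 0 < √3 * √(1 + m ^ 2) := by positivity
  constructor
  · intro htk
    refine le_one_sub_div_of_cube_le measureReal_nonneg hr hk ht ?_ h1 ?_
    · rw [lt_div_iff₀ h3pos] at htk
      nlinarith [Real.mul_self_sqrt (show (0 : ℝ) ≤ 3 by norm_num)]
    · convert h3 using 1
      rw [mul_pow, mul_pow, Real.sq_sqrt (by norm_num), Real.sq_sqrt (by positivity)]
      ring
  · intro _
    rw [le_div_iff₀ (by positivity), mul_comm]
    exact mul_sq_le_of_cube_le measureReal_nonneg hr ht.le (by positivity) h3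
end

section
/- Let X be a real random variable whose distribution is unimodal at 0 with Var(X) = 1. Then there exists a real random variable S with S ≥ 0 almost surely, whose distribution is unimodal at 0 with Var(S) = 1, such that P(S > t) ≥ P(X > t) for every t > 0. -/
open MeasureTheory ProbabilityTheory

/-!
Take `S = c |X|` with `c = Var(|X|)^(-1/2)`. Off its mode a unimodal law has no atoms, so for
`x > 0` the CDF of `|X|` is `F x - F (-x)`, a concave function minus a convex one: folding keeps
unimodality at `0`, and so does scaling. Since `(𝔼 X)² ≤ (𝔼 |X|)²` while `𝔼 X² = 𝔼 |X|²`,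
`Var(|X|) ≤ Var(X) = 1`, hence `c ≥ 1` and `S ≥ |X| ≥ X`. Finally `Var(|X|) > 0`: otherwise the
law of `|X|` would be a point mass `δ_a`, which is not unimodal at `0` when `a > 0`; so `X = 0`
a.s., contradicting `Var(X) = 1`.
-/

open Set

lemma not_unimodalAt_dirac {m a : ℝ} (h : m < a) : ¬ UnimodalAt (Measure.dirac a) m := by
  intro huni
  have hcdf : ∀ x, x < a → (Measure.dirac a (Iic x)).toReal = 0 := fun x hx => by
    simp [Measure.dirac_apply' _ measurableSet_Iic, hx.not_ge]
  set u := (m + a) / 2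
  have hmid := huni.2.2 (show u ∈ Ioi m by simp [u]; linarith) (show a ∈ Ioi m from h)
    (show (0 : ℝ) ≤ 1 / 2 by norm_num) (show (0 : ℝ) ≤ 1 / 2 by norm_num) (by norm_num)
  simp only [smul_eq_mul] at hmid
  rw [hcdf (1 / 2 * u + 1 / 2 * a) (by simp [u]; linarith), hcdf u (by simp [u]; linarith),
    Measure.dirac_apply_of_mem (mem_Iic.2 le_rfl)] at hmid
  norm_num at hmid

namespace UnimodalAt

variable {μ : Measure ℝ} {m : ℝ}

lemma measure_singleton_eq_zero [IsProbabilityMeasure μ] (h : UnimodalAt μ m) {a : ℝ}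
    (ha : a ≠ m) : μ {a} = 0 := by
  have hcdf : ⇑(cdf μ) = fun x => (μ (Iic x)).toReal := funext (cdf_eq_real μ)
  have hcont : ContinuousAt (cdf μ) a := by
    rw [hcdf]
    rcases ha.lt_or_gt with ha | ha
    · exact (h.1.continuousOn isOpen_Iio).continuousAt (Iio_mem_nhds ha)
    · exact (h.2.continuousOn isOpen_Ioi).continuousAt (Ioi_mem_nhds ha)
  rw [← measure_cdf μ, StieltjesFunction.measure_singleton,
    hcont.continuousWithinAt.leftLim_eq, sub_self, ENNReal.ofReal_zero]

lemma map_const_mul (h : UnimodalAt μ m) {c : ℝ} (hc : 0 < c) :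
    UnimodalAt (μ.map (c * ·)) (c * m) := by
  have hcdf : ∀ x, (μ.map (c * ·)) (Iic x) = μ (Iic (c⁻¹ • x)) := fun x => by
    rw [Measure.map_apply (measurable_const_mul c) measurableSet_Iic,
      preimage_const_mul_Iic₀ x hc, smul_eq_mul, div_eq_inv_mul]
  set g : ℝ →ₗ[ℝ] ℝ := c⁻¹ • LinearMap.id
  have hIio : g ⁻¹' Iio m = Iio (c * m) := by ext; simp [g, inv_mul_lt_iff₀ hc]
  have hIoi : g ⁻¹' Ioi m = Ioi (c * m) := by ext; simp [g, lt_inv_mul_iff₀ hc]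
  simp_rw [UnimodalAt, hcdf]
  exact ⟨hIio ▸ h.1.comp_linearMap g, hIoi ▸ h.2.comp_linearMap g⟩

lemma map_abs [IsProbabilityMeasure μ] (h : UnimodalAt μ 0) : UnimodalAt (μ.map (|·|)) 0 := by
  have hcdf : ∀ x, (μ.map (|·|)) (Iic x) = μ ((|·|) ⁻¹' Iic x) := fun x =>
    Measure.map_apply measurable_abs measurableSet_Iic
  constructor
  · refine (convexOn_const 0 (convex_Iio 0)).congr fun x (hx : x < 0) => ?_
    have hempty : (|·|) ⁻¹' Iic x = (∅ : Set ℝ) :=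
      eq_empty_of_forall_notMem fun y (hy : |y| ≤ x) => (abs_nonneg y).not_gt (hy.trans_lt hx)
    rw [hcdf, hempty, measure_empty, ENNReal.toReal_zero]
  · set g : ℝ →ₗ[ℝ] ℝ := -LinearMap.id
    have hIio : g ⁻¹' Iio 0 = Ioi 0 := by ext; simp [g]
    refine (h.2.sub (hIio ▸ h.1.comp_linearMap g)).congr fun x (hx : 0 < x) => ?_
    have hIcc : (|·|) ⁻¹' Iic x = Icc (-x) x := by ext; simp [abs_le]
    have hatom : μ {-x} = 0 := h.measure_singleton_eq_zero (by simpa using hx.ne')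
    rw [hcdf, hIcc, ← measure_congr (Ioc_ae_eq_Icc' hatom), ← Iic_sdiff_Iic]
    exact (measureReal_sdiff (Iic_subset_Iic.2 (neg_le_self hx.le)) measurableSet_Iic).symm

lemma integral_le_of_evariance_eq_zero {Ω : Type*} {mΩ : MeasurableSpace Ω} {P : Measure Ω}
    [IsProbabilityMeasure P] {Y : Ω → ℝ} (hY : Measurable Y) (huni : UnimodalAt (P.map Y) m)
    (hvar : evariance Y P = 0) : P[Y] ≤ m := by
  have hconst : Y =ᵐ[P] fun _ => P[Y] := (evariance_eq_zero_iff hY.aemeasurable).1 hvar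
  rw [Measure.map_congr hconst, Measure.map_const, measure_univ, one_smul] at huni
  by_contra! hlt
  exact not_unimodalAt_dirac hlt huni

end UnimodalAt

section

variable {Ω : Type*} {mΩ : MeasurableSpace Ω} {P : Measure Ω} [IsProbabilityMeasure P] {X : Ω → ℝ}

lemma variance_abs_add_sq_integral_abs (hX : MemLp X 2 P) :
    Var[|X|; P] + (∫ ω, |X ω| ∂P) ^ 2 = Var[X; P] + (∫ ω, X ω ∂P) ^ 2 := by
  rw [variance_eq_sub hX.abs, variance_eq_sub hX]
  simp only [Pi.pow_apply, Pi.abs_apply, sq_abs, sub_add_cancel]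

lemma variance_abs_le (hX : MemLp X 2 P) : Var[|X|; P] ≤ Var[X; P] := by
  have hsq : (∫ ω, X ω ∂P) ^ 2 ≤ (∫ ω, |X ω| ∂P) ^ 2 :=
    (sq_abs _).symm.trans_le (pow_le_pow_left₀ (abs_nonneg _) abs_integral_le_integral_abs 2)
  linarith [variance_abs_add_sq_integral_abs hX]

lemma variance_abs_pos_of_unimodalAt (hX : Measurable X) (hX2 : MemLp X 2 P)
    (huni : UnimodalAt (P.map |X|) 0) (hvar : Var[X; P] ≠ 0) : 0 < Var[|X|; P] := by
  refine (variance_nonneg _ _).lt_of_ne fun h0 => hvar ?_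
  have hmean : ∫ ω, |X ω| ∂P ≤ 0 := huni.integral_le_of_evariance_eq_zero (Y := |X|) hX.abs
    (by rw [← hX2.abs.ofReal_variance_eq, ← h0, ENNReal.ofReal_zero])
  have hmean0 : ∫ ω, |X ω| ∂P = 0 := le_antisymm hmean (integral_nonneg fun _ => abs_nonneg _)
  nlinarith [variance_abs_add_sq_integral_abs hX2, sq_nonneg (∫ ω, X ω ∂P), variance_nonneg X P]

end

theorem stmt_9 {Ω : Type*} {mΩ : MeasurableSpace Ω} (P : Measure Ω)
    [IsProbabilityMeasure P] (X : Ω → ℝ) (hX : Measurable X)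
    (huni : UnimodalAt (P.map X) 0) (hvar : variance X P = 1) :
    ∃ ν : Measure ℝ, IsProbabilityMeasure ν ∧ UnimodalAt ν 0 ∧
      ν {x | x < 0} = 0 ∧ variance id ν = 1 ∧
      ∀ t : ℝ, 0 < t → P {ω | t < X ω} ≤ ν {x | t < x} := by
  have hX2 : MemLp X 2 P := memLp_two_of_variance_ne_zero hX.aestronglyMeasurable (by simp [hvar])
  have : IsProbabilityMeasure (P.map X) := Measure.isProbabilityMeasure_map hX.aemeasurable
  have huniAbs : UnimodalAt (P.map |X|) 0 := Measure.map_map measurable_abs hX ▸ huni.map_abs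
  have hσ_le : Var[|X|; P] ≤ 1 := hvar ▸ variance_abs_le hX2
  have hσ_pos : 0 < Var[|X|; P] :=
    variance_abs_pos_of_unimodalAt hX hX2 huniAbs (by simp [hvar])
  set c := (√(Var[|X|; P]))⁻¹
  have hc : 0 < c := inv_pos.2 (Real.sqrt_pos.2 hσ_pos)
  have hc1 : 1 ≤ c := one_le_inv₀ (Real.sqrt_pos.2 hσ_pos) |>.2 (Real.sqrt_le_one.2 hσ_le)
  refine ⟨P.map fun ω => c * |X ω|, Measure.isProbabilityMeasure_map (by fun_prop), ?_, ?_, ?_, ?_⟩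
  · have h := huniAbs.map_const_mul hc
    rwa [mul_zero, Measure.map_map (measurable_const_mul c) (show Measurable |X| from hX.abs)] at h
  · have hempty : {ω | c * |X ω| < 0} = ∅ :=
      eq_empty_of_forall_notMem fun ω => (by positivity : 0 ≤ c * |X ω|).not_gt
    rw [show {x : ℝ | x < 0} = Iio 0 from rfl, Measure.map_apply (by fun_prop) measurableSet_Iio]
    exact (congrArg P hempty).trans measure_empty
  · rw [variance_map (by fun_prop) (by fun_prop), Function.id_comp, variance_const_mul, inv_pow,
      Real.sq_sqrt hσ_pos.le]
    exact inv_mul_cancel₀ hσ_pos.ne'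
  · refine fun t _ => (measure_mono fun ω (hω : t < X ω) => ?_).trans
      (Measure.le_map_apply (by fun_prop) _)
    exact hω.trans_le ((le_abs_self _).trans (le_mul_of_one_le_left (abs_nonneg _) hc1))
end

section
/- Fix u ≥ 2/√3 and let Y have the distribution (1 − 4/(3u²))·δ₀ + (the absolutely continuous measure with density 8(u²−1)^{1/2}/(9u⁴) on the interval (0, 3u²/(2(u²−1)^{1/2})) and 0 elsewhere). Then this is a probability distribution that is unimodal at 0, with mean E[Y] = 1/(u²−1)^{1/2} and Var(Y) = 1, and for every t with (2/√3)·(u²/(u²−1))^{1/2} ≤ t ≤ 3u²/(2(u²−1)^{1/2}), P(Y > t) = (4/(3u²))·(1 − 2t(u²−1)^{1/2}/(3u²)). -/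
open MeasureTheory ProbabilityTheory

open Set

noncomputable section

def atomAddUniform (p c b : ℝ) : Measure ℝ :=
  ENNReal.ofReal p • Measure.dirac 0 + ENNReal.ofReal c • volume.restrict (Ioo 0 b)

end

section AtomAddUniform

variable {p c b : ℝ}

lemma atomAddUniform_apply {s : Set ℝ} (hs : MeasurableSet s) :
    atomAddUniform p c b s =
      ENNReal.ofReal p * Measure.dirac 0 s + ENNReal.ofReal c * volume (s ∩ Ioo 0 b) := by
  simp only [atomAddUniform, Measure.add_apply, Measure.smul_apply, Measure.restrict_apply hs,
    smul_eq_mul]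

lemma isProbabilityMeasure_atomAddUniform (hp : 0 ≤ p) (hc : 0 ≤ c) (hb : 0 ≤ b)
    (h : p + c * b = 1) : IsProbabilityMeasure (atomAddUniform p c b) := by
  constructor
  rw [atomAddUniform_apply MeasurableSet.univ, univ_inter, Real.volume_Ioo, sub_zero,
    measure_univ, mul_one, ← ENNReal.ofReal_mul hc, ← ENNReal.ofReal_add hp (by positivity), h,
    ENNReal.ofReal_one]

lemma atomAddUniform_Iic_of_neg {x : ℝ} (hx : x < 0) : atomAddUniform p c b (Iic x) = 0 := by
  have hdisj : Iic x ∩ Ioo 0 b = ∅ :=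
    eq_empty_of_forall_notMem fun y ⟨hyx, hy0, _⟩ => (hyx.trans_lt hx).not_gt hy0
  simp [atomAddUniform_apply measurableSet_Iic, hdisj, hx.not_ge]

lemma volume_Iic_inter_Ioo (x : ℝ) :
    volume (Iic x ∩ Ioo 0 b) = ENNReal.ofReal (min x b) := by
  refine le_antisymm ?_ ?_
  · calc volume (Iic x ∩ Ioo 0 b) ≤ volume (Ioc 0 (min x b)) :=
          measure_mono fun y ⟨hyx, hy0, hyb⟩ => ⟨hy0, le_min hyx hyb.le⟩
      _ = ENNReal.ofReal (min x b) := by rw [Real.volume_Ioc, sub_zero]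
  · calc ENNReal.ofReal (min x b) = volume (Ioo 0 (min x b)) := by rw [Real.volume_Ioo, sub_zero]
      _ ≤ volume (Iic x ∩ Ioo 0 b) := measure_mono fun y ⟨hy0, hy⟩ =>
          ⟨(lt_min_iff.1 hy).1.le, hy0, (lt_min_iff.1 hy).2⟩

lemma atomAddUniform_Iic_toReal_of_pos (hp : 0 ≤ p) (hc : 0 ≤ c) (hb : 0 ≤ b) {x : ℝ}
    (hx : 0 < x) : (atomAddUniform p c b (Iic x)).toReal = p + c * min x b := by
  have hmin : 0 ≤ c * min x b := mul_nonneg hc (le_min hx.le hb)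
  rw [atomAddUniform_apply measurableSet_Iic, volume_Iic_inter_Ioo,
    Measure.dirac_apply_of_mem (mem_Iic.2 hx.le), mul_one, ← ENNReal.ofReal_mul hc,
    ← ENNReal.ofReal_add hp hmin, ENNReal.toReal_ofReal (add_nonneg hp hmin)]

lemma unimodalAt_atomAddUniform (hp : 0 ≤ p) (hc : 0 ≤ c) (hb : 0 ≤ b) :
    UnimodalAt (atomAddUniform p c b) 0 := by
  constructor
  · refine (convexOn_const 0 (convex_Iio 0)).congr fun x hx => ?_
    simp [atomAddUniform_Iic_of_neg (mem_Iio.1 hx)]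
  · refine ((((concaveOn_id (convex_Ioi 0)).inf (concaveOn_const b (convex_Ioi 0))).smul
      hc).add_const p).congr fun x hx => ?_
    simp [atomAddUniform_Iic_toReal_of_pos hp hc hb (mem_Ioi.1 hx), add_comm]

lemma atomAddUniform_Ioi_toReal (hc : 0 ≤ c) {t : ℝ} (ht : 0 ≤ t) (htb : t ≤ b) :
    (atomAddUniform p c b (Ioi t)).toReal = c * (b - t) := by
  have hinter : Ioi t ∩ Ioo 0 b = Ioo t b := by
    ext y
    simp only [mem_inter_iff, mem_Ioi, mem_Ioo]
    exact ⟨fun ⟨hty, _, hyb⟩ => ⟨hty, hyb⟩, fun ⟨hty, hyb⟩ => ⟨hty, ht.trans_lt hty, hyb⟩⟩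
  simp [atomAddUniform_apply measurableSet_Ioi, hinter, ht, ← ENNReal.ofReal_mul hc,
    ENNReal.toReal_ofReal (mul_nonneg hc (sub_nonneg.2 htb))]

lemma integrable_atomAddUniform {f : ℝ → ℝ} (hf : IntegrableOn f (Ioo 0 b)) :
    Integrable f (atomAddUniform p c b) :=
  ((integrable_dirac enorm_lt_top).smul_measure ENNReal.ofReal_ne_top).add_measure
    (hf.smul_measure ENNReal.ofReal_ne_top)

lemma integral_atomAddUniform (hp : 0 ≤ p) (hc : 0 ≤ c) {f : ℝ → ℝ}
    (hf : IntegrableOn f (Ioo 0 b)) :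
    ∫ x, f x ∂atomAddUniform p c b = p * f 0 + c * ∫ x in Ioo 0 b, f x := by
  rw [atomAddUniform, integral_add_measure
    ((integrable_dirac enorm_lt_top).smul_measure ENNReal.ofReal_ne_top)
    (hf.smul_measure ENNReal.ofReal_ne_top), integral_smul_measure, integral_smul_measure,
    integral_dirac, ENNReal.toReal_ofReal hp, ENNReal.toReal_ofReal hc, smul_eq_mul, smul_eq_mul]

lemma integral_pow_atomAddUniform (hp : 0 ≤ p) (hc : 0 ≤ c) (hb : 0 ≤ b) {n : ℕ} (hn : n ≠ 0) :
    ∫ x, x ^ n ∂atomAddUniform p c b = c * (b ^ (n + 1) / (n + 1)) := by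
  rw [integral_atomAddUniform hp hc
      ((continuous_pow n).integrableOn_Icc.mono_set Ioo_subset_Icc_self),
    ← integral_Ioc_eq_integral_Ioo, ← intervalIntegral.integral_of_le hb, integral_pow]
  simp [hn]

lemma integral_id_atomAddUniform (hp : 0 ≤ p) (hc : 0 ≤ c) (hb : 0 ≤ b) :
    ∫ x, x ∂atomAddUniform p c b = c * (b ^ 2 / 2) := by
  simpa [one_add_one_eq_two] using integral_pow_atomAddUniform hp hc hb one_ne_zero

lemma variance_id_atomAddUniform (hp : 0 ≤ p) (hc : 0 ≤ c) (hb : 0 ≤ b) (h : p + c * b = 1) :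
    variance id (atomAddUniform p c b) = c * (b ^ 3 / 3) - (c * (b ^ 2 / 2)) ^ 2 := by
  have := isProbabilityMeasure_atomAddUniform hp hc hb h
  have hmemLp : MemLp id 2 (atomAddUniform p c b) :=
    (memLp_two_iff_integrable_sq aestronglyMeasurable_id).2 <| integrable_atomAddUniform
      ((continuous_pow 2).integrableOn_Icc.mono_set Ioo_subset_Icc_self)
  rw [variance_eq_sub hmemLp]
  simp only [Pi.pow_apply, id]
  rw [integral_id_atomAddUniform hp hc hb, integral_pow_atomAddUniform hp hc hb two_ne_zero]
  norm_num

end AtomAddUniform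

theorem stmt_11 (u : ℝ) (hu : 2 / Real.sqrt 3 ≤ u) (μ : Measure ℝ)
    (hμ : μ = ENNReal.ofReal (1 - 4 / (3 * u ^ 2)) • Measure.dirac 0 +
      ENNReal.ofReal (8 * Real.sqrt (u ^ 2 - 1) / (9 * u ^ 4)) •
        volume.restrict (Set.Ioo 0 (3 * u ^ 2 / (2 * Real.sqrt (u ^ 2 - 1))))) :
    IsProbabilityMeasure μ ∧ UnimodalAt μ 0 ∧
    (∫ x, x ∂μ) = 1 / Real.sqrt (u ^ 2 - 1) ∧
    variance id μ = 1 ∧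
    ∀ t : ℝ, (2 / Real.sqrt 3) * Real.sqrt (u ^ 2 / (u ^ 2 - 1)) ≤ t →
      t ≤ 3 * u ^ 2 / (2 * Real.sqrt (u ^ 2 - 1)) →
      (μ (Set.Ioi t)).toReal =
        (4 / (3 * u ^ 2)) * (1 - 2 * t * Real.sqrt (u ^ 2 - 1) / (3 * u ^ 2)) := by
  have hu2 : 4 / 3 ≤ u ^ 2 := by
    have := pow_le_pow_left₀ (by positivity) hu 2
    rw [div_pow, Real.sq_sqrt zero_le_three] at this
    linarith
  have hu0 : u ≠ 0 := by rintro rfl; linarith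
  set s := Real.sqrt (u ^ 2 - 1)
  have hs : 0 < s := Real.sqrt_pos.2 (by linarith)
  have hs2 : s ^ 2 = u ^ 2 - 1 := Real.sq_sqrt (by linarith)
  have hp : 0 ≤ 1 - 4 / (3 * u ^ 2) := sub_nonneg.2 <| (div_le_one (by positivity)).2 (by linarith)
  have hc : 0 ≤ 8 * s / (9 * u ^ 4) := by positivity
  have hb : 0 ≤ 3 * u ^ 2 / (2 * s) := by positivity
  have htotal : 1 - 4 / (3 * u ^ 2) + 8 * s / (9 * u ^ 4) * (3 * u ^ 2 / (2 * s)) = 1 := by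
    field_simp; ring
  rw [show μ = atomAddUniform _ _ _ from hμ]
  refine ⟨isProbabilityMeasure_atomAddUniform hp hc hb htotal, unimodalAt_atomAddUniform hp hc hb,
    ?_, ?_, fun t ht htb => ?_⟩
  · rw [integral_id_atomAddUniform hp hc hb]
    field_simp
    ring
  · rw [variance_id_atomAddUniform hp hc hb htotal]
    field_simp
    rw [hs2]
    ring
  · rw [atomAddUniform_Ioi_toReal hc (le_trans (by positivity) ht) htb]
    field_simp
    ring
end

section
/- Let X and Y be independent real random variables, each with a unimodal distribution, with means μ_X = μ_Y = 0 and standard deviations σ_X = σ_Y = 1, and assume the distribution of X − Y is unimodal at some mode m with |m| ≤ √6 (as holds when at least one of X, Y is strong unimodal). Then for μ ≥ √6: P(X ≤ Y + μ) ≥ (μ − √6)/(2√6) if √6 ≤ μ ≤ √6 + 4√(2/3), and P(X ≤ Y + μ) ≥ 1 − 32/(9(μ − √6)²) if μ > √6 + 4√(2/3). -/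
open MeasureTheory ProbabilityTheory

/-!
`X - Y` has mean `0` and, by independence, variance `2`, so Chebyshev's inequality gives
`P(X ≤ Y + μ) ≥ 1 - 2 / μ²`. For `μ ≥ √6` this is at least `2 / 3`, which dominates the first
bound on its range, and `2 / μ² ≤ 32 / (9 (μ - √6)²)` gives the second.
-/

namespace ProbabilityTheory

variable {Ω : Type*} {mΩ : MeasurableSpace Ω} {P : Measure Ω}

lemma IndepFun.variance_fun_sub [IsFiniteMeasure P] {X Y : Ω → ℝ} (hX : MemLp X 2 P)
    (hY : MemLp Y 2 P) (h : IndepFun X Y P) :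
    variance (fun ω ↦ X ω - Y ω) P = variance X P + variance Y P := by
  rw [ProbabilityTheory.variance_fun_sub hX hY, h.covariance_eq_zero hX hY]
  ring

lemma one_sub_variance_div_sq_le_measureReal_le [IsProbabilityMeasure P] {Z : Ω → ℝ}
    (hZ : MemLp Z 2 P) (hmean : P[Z] = 0) {c : ℝ} (hc : 0 < c) :
    1 - variance Z P / c ^ 2 ≤ P.real {ω | Z ω ≤ c} := by
  have hmeas : NullMeasurableSet {ω | Z ω ≤ c} P :=
    nullMeasurableSet_le hZ.aestronglyMeasurable.aemeasurable aemeasurable_const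
  have htail : {ω | Z ω ≤ c}ᶜ ⊆ {ω | c ≤ |Z ω - P[Z]|} := fun ω hω ↦ by
    simp only [Set.mem_compl_iff, Set.mem_ofPred_eq, not_le, hmean, sub_zero] at hω ⊢
    exact hω.le.trans (le_abs_self _)
  have hcheb : P.real {ω | Z ω ≤ c}ᶜ ≤ variance Z P / c ^ 2 :=
    ENNReal.toReal_le_of_le_ofReal (div_nonneg (variance_nonneg _ _) (sq_nonneg _))
      ((measure_mono htail).trans (meas_ge_le_variance_div_sq hZ hc))
  rw [probReal_compl_eq_one_sub₀ hmeas] at hcheb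
  linarith

end ProbabilityTheory

lemma div_two_sqrt_six_le_one_sub_two_div_sq {μ : ℝ} (hμ : Real.sqrt 6 ≤ μ)
    (hμ' : μ ≤ Real.sqrt 6 + 4 * Real.sqrt (2 / 3)) :
    (μ - Real.sqrt 6) / (2 * Real.sqrt 6) ≤ 1 - 2 / μ ^ 2 := by
  have h6 : Real.sqrt 6 ^ 2 = 6 := Real.sq_sqrt (by norm_num)
  have hsqrt : Real.sqrt (2 / 3) = Real.sqrt 6 / 3 := by
    rw [show (2 / 3 : ℝ) = 6 / 3 ^ 2 by norm_num, Real.sqrt_div' _ (by norm_num),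
      Real.sqrt_sq (by norm_num)]
  calc (μ - Real.sqrt 6) / (2 * Real.sqrt 6) ≤ 2 / 3 := by
        rw [div_le_iff₀ (by positivity)]
        rw [hsqrt] at hμ'
        linarith
    _ = 1 - 2 / 6 := by norm_num
    _ ≤ 1 - 2 / μ ^ 2 := by
        gcongr
        nlinarith

lemma two_div_sq_le_div_sq_sub {a μ : ℝ} (ha : 0 ≤ a) (h : a < μ) :
    2 / μ ^ 2 ≤ 32 / (9 * (μ - a) ^ 2) := by
  have hd : 0 < μ - a := sub_pos.mpr h
  rw [div_le_div_iff₀ (by nlinarith) (by positivity)]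
  nlinarith

theorem stmt_12_general {Ω : Type*} {mΩ : MeasurableSpace Ω} (P : Measure Ω)
    [IsProbabilityMeasure P] (X Y : Ω → ℝ) (hX : Measurable X) (hY : Measurable Y)
    (hindep : IndepFun X Y P)
    (hmeanX : ∫ ω, X ω ∂P = 0) (hmeanY : ∫ ω, Y ω ∂P = 0)
    (hvarX : variance X P = 1) (hvarY : variance Y P = 1)
    (μ : ℝ) (hμ : Real.sqrt 6 ≤ μ) :
    (μ ≤ Real.sqrt 6 + 4 * Real.sqrt (2 / 3) →
      (μ - Real.sqrt 6) / (2 * Real.sqrt 6) ≤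
        (P {ω | X ω ≤ Y ω + μ}).toReal) ∧
    (Real.sqrt 6 + 4 * Real.sqrt (2 / 3) < μ →
      1 - 32 / (9 * (μ - Real.sqrt 6) ^ 2) ≤
        (P {ω | X ω ≤ Y ω + μ}).toReal) := by
  have hXL2 : MemLp X 2 P :=
    memLp_two_of_variance_ne_zero hX.aestronglyMeasurable (by simp [hvarX])
  have hYL2 : MemLp Y 2 P :=
    memLp_two_of_variance_ne_zero hY.aestronglyMeasurable (by simp [hvarY])
  have hmean : P[fun ω ↦ X ω - Y ω] = 0 := by
    rw [integral_sub (hXL2.integrable one_le_two) (hYL2.integrable one_le_two), hmeanX, hmeanY,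
      sub_zero]
  have hvar : variance (fun ω ↦ X ω - Y ω) P = 2 := by
    rw [hindep.variance_fun_sub hXL2 hYL2, hvarX, hvarY]
    norm_num
  have hset : {ω | X ω ≤ Y ω + μ} = {ω | X ω - Y ω ≤ μ} := by
    simp only [sub_le_iff_le_add']
  have hcheb : 1 - 2 / μ ^ 2 ≤ (P {ω | X ω ≤ Y ω + μ}).toReal := by
    have := one_sub_variance_div_sq_le_measureReal_le (Z := fun ω ↦ X ω - Y ω) (hXL2.sub hYL2) hmean
      ((Real.sqrt_pos.mpr (by norm_num : (0 : ℝ) < 6)).trans_le hμ)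
    rwa [hvar, ← hset] at this
  refine ⟨fun hμ' ↦ (div_two_sqrt_six_le_one_sub_two_div_sq hμ hμ').trans hcheb, fun hμ' ↦ ?_⟩
  have := two_div_sq_le_div_sq_sub (Real.sqrt_nonneg 6)
    ((lt_add_of_pos_right _ (by positivity)).trans hμ')
  linarith

theorem stmt_12 {Ω : Type*} {mΩ : MeasurableSpace Ω} (P : Measure Ω)
    [IsProbabilityMeasure P] (X Y : Ω → ℝ) (hX : Measurable X) (hY : Measurable Y)
    (hindep : IndepFun X Y P)
    (huniX : ∃ a : ℝ, UnimodalAt (P.map X) a)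
    (huniY : ∃ a : ℝ, UnimodalAt (P.map Y) a)
    (hmeanX : ∫ ω, X ω ∂P = 0) (hmeanY : ∫ ω, Y ω ∂P = 0)
    (hvarX : variance X P = 1) (hvarY : variance Y P = 1)
    (m : ℝ) (hm : |m| ≤ Real.sqrt 6)
    (huniXY : UnimodalAt (P.map (fun ω => X ω - Y ω)) m)
    (μ : ℝ) (hμ : Real.sqrt 6 ≤ μ) :
    (μ ≤ Real.sqrt 6 + 4 * Real.sqrt (2 / 3) →
      (μ - Real.sqrt 6) / (2 * Real.sqrt 6) ≤
        (P {ω | X ω ≤ Y ω + μ}).toReal) ∧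
    (Real.sqrt 6 + 4 * Real.sqrt (2 / 3) < μ →
      1 - 32 / (9 * (μ - Real.sqrt 6) ^ 2) ≤
        (P {ω | X ω ≤ Y ω + μ}).toReal) :=
  stmt_12_general (mΩ := mΩ) P X Y hX hY hindep hmeanX hmeanY hvarX hvarY μ hμ
end

section
/- Fix b > 0, N ≥ 1/(2b), and μ > 0. Let B₀, B₁ ⊆ [−N, N] be symmetric Borel sets with Lebesgue measure λ(B₀) = λ(B₁) = 1/b, let Y₀ and Y₁ be independent random variables with densities b·1_{B₀} and b·1_{B₁} respectively, and let U₀ and U₁ be independent random variables each uniformly distributed on (−1/(2b), 1/(2b)). Then P(|Y₀ − Y₁| < μ) ≤ P(|U₀ − U₁| < μ). -/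
open MeasureTheory ProbabilityTheory Set
open scoped ENNReal

/-!
By independence, both probabilities are `b²` times the Lebesgue measure of the strip
`{|x - y| < μ}` restricted to `B₀ × B₁`, resp. `I × I` with `I = (-1/(2b), 1/(2b))`, and by
Fubini this is `∫_{-μ}^{μ} λ(B₀ ∩ (B₁ + t)) dt`. Put `L = 1/b`. For `μ > L` the strip contains
`I × I`, so the uniform side is the total mass `L²`. For `μ ≤ L` the uniform side is exactly
`2μL - μ²`. For general sets, cut off the lowest part of measure `μ` of each, `B₀'` and `B₁'`:
for every `t`, the part of `B₀ ∩ (B₁ + t)` outside `B₀' ∩ (B₁' + t)` lies in one of the two tails,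
of measure `L - μ`, while `∫ λ(B₀' ∩ (B₁' + t)) dt = μ²`. Hence the integral is at most
`2μ(L - μ) + μ² = 2μL - μ²`.
-/

def strip (r : ℝ) : Set (ℝ × ℝ) := {p | |p.1 - p.2| < r}

lemma measurableSet_strip (r : ℝ) : MeasurableSet (strip r) :=
  measurableSet_lt (measurable_fst.sub measurable_snd).abs measurable_const

lemma ProbabilityTheory.IndepFun.measure_abs_sub_lt {Ω : Type*} {mΩ : MeasurableSpace Ω}
    {P : Measure Ω} [IsFiniteMeasure P] {X Y : Ω → ℝ} (h : IndepFun X Y P) (hX : Measurable X)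
    (hY : Measurable Y) (r : ℝ) : P {ω | |X ω - Y ω| < r} = (P.map X).prod (P.map Y) (strip r) := by
  rw [← (indepFun_iff_map_prod_eq_prod_map_map hX.aemeasurable hY.aemeasurable).1 h,
    Measure.map_apply (hX.prodMk hY) (measurableSet_strip r)]
  rfl

/-- The length of `A ∩ (B + t)`, i.e. the autocorrelation `(𝟙_A ⋆ 𝟙_{-B})(t)`. -/
noncomputable def overlap (A B : Set ℝ) (t : ℝ) : ℝ≥0∞ := volume (A ∩ (· - t) ⁻¹' B)

lemma lintegral_overlap {ν : Measure ℝ} [SFinite ν] {A B : Set ℝ} (hB : MeasurableSet B) :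
    ∫⁻ t, overlap A B t ∂ν = ∫⁻ x in A, ν ((x - ·) ⁻¹' B) := by
  have hE : MeasurableSet {p : ℝ × ℝ | p.2 - p.1 ∈ B} := (measurable_snd.sub measurable_fst) hB
  calc ∫⁻ t, overlap A B t ∂ν = ν.prod (volume.restrict A) {p | p.2 - p.1 ∈ B} := by
        rw [Measure.prod_apply hE]
        refine lintegral_congr fun t => ?_
        rw [overlap, inter_comm, ← Measure.restrict_apply (measurable_sub_const t hB)]
        rfl
    _ = ∫⁻ x in A, ν ((x - ·) ⁻¹' B) := by
        rw [Measure.prod_apply_symm hE]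
        rfl

lemma lintegral_overlap_volume {A B : Set ℝ} (hB : MeasurableSet B) :
    ∫⁻ t, overlap A B t = volume A * volume B := by
  rw [lintegral_overlap hB, lintegral_congr fun x =>
    (Measure.measurePreserving_sub_left volume x).measure_preimage hB.nullMeasurableSet,
    setLIntegral_const, mul_comm]

lemma prod_restrict_strip {A B : Set ℝ} (hB : MeasurableSet B) (r : ℝ) :
    (volume.restrict A).prod (volume.restrict B) (strip r) =
      ∫⁻ t in Ioo (-r) r, overlap A B t := by
  rw [lintegral_overlap hB, Measure.prod_apply (measurableSet_strip r)]
  refine lintegral_congr fun x => ?_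
  have hslice : Prod.mk x ⁻¹' strip r = (x - ·) ⁻¹' Ioo (-r) r := by
    ext y
    simp only [strip, mem_preimage, mem_ofPred_eq, mem_Ioo, abs_lt]
  have hsub : Measurable (x - ·) := measurable_const.sub measurable_id
  rw [hslice, Measure.restrict_apply (hsub measurableSet_Ioo), Measure.restrict_apply (hsub hB),
    ← (Measure.measurePreserving_sub_left volume x).measure_preimage
      ((hsub measurableSet_Ioo).inter hB).nullMeasurableSet]
  simp only [preimage_inter, preimage_preimage, sub_sub_cancel, preimage_id']
  rw [inter_comm]

lemma exists_volume_inter_Iio_eq {A : Set ℝ} (hA : Bornology.IsBounded A) {m : ℝ≥0∞}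
    (hm : m ≤ volume A) : ∃ a, volume (A ∩ Iio a) = m := by
  obtain ⟨⟨lo, hlo⟩, ⟨hi, hhi⟩⟩ := isBounded_iff_bddBelow_bddAbove.1 hA
  have hAfin : volume A ≠ ∞ := hA.measure_lt_top.ne
  have hfin (a : ℝ) : volume (A ∩ Iio a) ≠ ∞ :=
    ((measure_mono inter_subset_left).trans_lt hA.measure_lt_top).ne
  set F : ℝ → ℝ := fun a => (volume (A ∩ Iio a)).toReal
  -- `F` is 1-Lipschitz since `A ∩ Iio a ⊆ (A ∩ Iio a') ∪ Ico a' a`.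
  have hF : Continuous F := by
    refine (LipschitzWith.of_le_add fun a a' => ?_).continuous
    have hcover : A ∩ Iio a ⊆ (A ∩ Iio a') ∪ Ico a' a := fun x ⟨hxA, hxa⟩ => by
      rcases lt_or_ge x a' with h | h
      exacts [Or.inl ⟨hxA, h⟩, Or.inr ⟨h, hxa⟩]
    have : volume (A ∩ Iio a) ≤ volume (A ∩ Iio a') + ENNReal.ofReal (dist a a') := by
      refine (measure_mono hcover).trans ((measure_union_le _ _).trans ?_)
      rw [Real.volume_Ico]
      gcongr
      exact (le_abs_self _).trans (Real.dist_eq a a').ge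
    simpa [F, ENNReal.toReal_add (hfin a') ENNReal.ofReal_ne_top, dist_nonneg] using
      ENNReal.toReal_mono (by finiteness) this
  have hF_lo : F lo = 0 := by
    simp [F, eq_empty_of_forall_notMem fun x (hx : x ∈ A ∩ Iio lo) => (hlo hx.1).not_gt hx.2]
  have hF_hi : F (hi + 1) = (volume A).toReal := by
    have hA_lt : A ⊆ Iio (hi + 1) := fun x hx => (hhi hx).trans_lt (lt_add_one hi)
    simp [F, inter_eq_self_of_subset_left hA_lt]
  obtain ⟨a, -, ha⟩ := intermediate_value_uIcc (a := lo) (b := hi + 1) hF.continuousOn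
    (show m.toReal ∈ uIcc (F lo) (F (hi + 1)) by
      rw [hF_lo, hF_hi]
      exact mem_uIcc_of_le ENNReal.toReal_nonneg (ENNReal.toReal_mono hAfin hm))
  exact ⟨a, (ENNReal.toReal_eq_toReal_iff' (hfin a) (ne_top_of_le_ne_top hAfin hm)).1 ha⟩

lemma overlap_le_add_overlap_inter_Iio {A B : Set ℝ} (hB : MeasurableSet B) (a c t : ℝ) :
    overlap A B t ≤ max (volume (A \ Iio a)) (volume (B \ Iio c)) +
      overlap (A ∩ Iio a) (B ∩ Iio c) t := by
  rcases le_or_gt t (a - c) with ht | ht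
  · have hcover : A ∩ (· - t) ⁻¹' B ⊆
        (· - t) ⁻¹' (B \ Iio c) ∪ (A ∩ Iio a) ∩ (· - t) ⁻¹' (B ∩ Iio c) := by
      rintro x ⟨hxA, hxB⟩
      by_cases hx : x - t < c
      · exact Or.inr ⟨⟨hxA, show x < a by linarith⟩, hxB, hx⟩
      · exact Or.inl ⟨hxB, hx⟩
    calc overlap A B t
        ≤ volume ((· - t) ⁻¹' (B \ Iio c)) + overlap (A ∩ Iio a) (B ∩ Iio c) t :=
          (measure_mono hcover).trans (measure_union_le _ _)
      _ ≤ _ := by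
          rw [(measurePreserving_sub_right volume t).measure_preimage
            (hB.diff measurableSet_Iio).nullMeasurableSet]
          gcongr
          exact le_max_right _ _
  · have hcover : A ∩ (· - t) ⁻¹' B ⊆ A \ Iio a ∪ (A ∩ Iio a) ∩ (· - t) ⁻¹' (B ∩ Iio c) := by
      rintro x ⟨hxA, hxB⟩
      by_cases hx : x < a
      · exact Or.inr ⟨⟨hxA, hx⟩, hxB, show x - t < c by linarith⟩
      · exact Or.inl ⟨hxA, hx⟩
    calc overlap A B t ≤ volume (A \ Iio a) + overlap (A ∩ Iio a) (B ∩ Iio c) t :=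
          (measure_mono hcover).trans (measure_union_le _ _)
      _ ≤ _ := by
          gcongr
          exact le_max_left _ _

lemma volume_diff_Iio_eq {A : Set ℝ} {a L m : ℝ} (hm : 0 ≤ m) (hA : volume A = .ofReal L)
    (ha : volume (A ∩ Iio a) = .ofReal m) : volume (A \ Iio a) = .ofReal (L - m) := by
  rw [ENNReal.ofReal_sub L hm, ← hA, ← ha, ← measure_inter_add_sdiff A measurableSet_Iio,
    ENNReal.add_sub_cancel_left (ha ▸ ENNReal.ofReal_ne_top)]

theorem prod_restrict_strip_le {A B : Set ℝ} (hB : MeasurableSet B)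
    (hA_bdd : Bornology.IsBounded A) (hB_bdd : Bornology.IsBounded B) {L r : ℝ} (hr : 0 ≤ r)
    (hrL : r ≤ L) (hA_vol : volume A = .ofReal L) (hB_vol : volume B = .ofReal L) :
    (volume.restrict A).prod (volume.restrict B) (strip r) ≤ .ofReal (2 * r * L - r ^ 2) := by
  have hr_vol : ENNReal.ofReal r ≤ .ofReal L := ENNReal.ofReal_le_ofReal hrL
  obtain ⟨a, ha⟩ := exists_volume_inter_Iio_eq hA_bdd (hA_vol ▸ hr_vol)
  obtain ⟨c, hc⟩ := exists_volume_inter_Iio_eq hB_bdd (hB_vol ▸ hr_vol)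
  have htail : max (volume (A \ Iio a)) (volume (B \ Iio c)) = .ofReal (L - r) := by
    rw [volume_diff_Iio_eq hr hA_vol ha, volume_diff_Iio_eq hr hB_vol hc, max_self]
  rw [prod_restrict_strip hB]
  calc ∫⁻ t in Ioo (-r) r, overlap A B t
      ≤ ∫⁻ t in Ioo (-r) r, (.ofReal (L - r) + overlap (A ∩ Iio a) (B ∩ Iio c) t) :=
        lintegral_mono fun t => htail ▸ overlap_le_add_overlap_inter_Iio hB a c t
    _ = .ofReal (L - r) * .ofReal (2 * r) +
          ∫⁻ t in Ioo (-r) r, overlap (A ∩ Iio a) (B ∩ Iio c) t := by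
        rw [lintegral_add_left measurable_const, setLIntegral_const, Real.volume_Ioo,
          sub_neg_eq_add, two_mul]
    _ ≤ .ofReal (L - r) * .ofReal (2 * r) + .ofReal r * .ofReal r := by
        gcongr
        calc _ ≤ ∫⁻ t, overlap (A ∩ Iio a) (B ∩ Iio c) t := setLIntegral_le_lintegral _ _
          _ = .ofReal r * .ofReal r := by
            rw [lintegral_overlap_volume (hB.inter measurableSet_Iio), ha, hc]
    _ = .ofReal (2 * r * L - r ^ 2) := by
        rw [← ENNReal.ofReal_mul (by linarith), ← ENNReal.ofReal_mul hr,
          ← ENNReal.ofReal_add (by nlinarith) (by positivity)]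
        ring_nf

lemma overlap_Ioo (c t : ℝ) : overlap (Ioo (-c) c) (Ioo (-c) c) t = .ofReal (2 * c - |t|) := by
  have hpre : (· - t) ⁻¹' Ioo (-c) c = Ioo (t - c) (t + c) := by
    ext x
    simp only [mem_preimage, mem_Ioo]
    constructor <;> rintro ⟨h₁, h₂⟩ <;> constructor <;> linarith
  rw [overlap, hpre, Ioo_inter_Ioo, Real.volume_Ioo]
  congr 1
  rcases le_total 0 t with ht | ht
  · rw [abs_of_nonneg ht, max_eq_right (by linarith), min_eq_left (by linarith)]
    ring
  · rw [abs_of_nonpos ht, max_eq_left (by linarith), min_eq_right (by linarith)]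
    ring

lemma integral_abs_symm (r : ℝ) (hr : 0 ≤ r) : ∫ t in -r..r, |t| = r ^ 2 := by
  rw [← intervalIntegral.integral_add_adjacent_intervals (b := 0)
    (continuous_abs.intervalIntegrable _ _) (continuous_abs.intervalIntegrable _ _),
    intervalIntegral.integral_congr (g := fun t => -t) fun t ht => abs_of_nonpos ?neg,
    intervalIntegral.integral_congr (g := fun t => t) fun t ht => abs_of_nonneg ?pos]
  · rw [intervalIntegral.integral_neg, integral_id, integral_id]
    ring
  case neg => exact (uIcc_of_le (neg_nonpos.2 hr) ▸ ht).2
  case pos => exact (uIcc_of_le hr ▸ ht).1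

lemma prod_restrict_Ioo_strip {c r : ℝ} (hr : 0 ≤ r) (hrc : r ≤ 2 * c) :
    (volume.restrict (Ioo (-c) c)).prod (volume.restrict (Ioo (-c) c)) (strip r) =
      .ofReal (2 * r * (2 * c) - r ^ 2) := by
  have hpos : ∀ᵐ t ∂volume.restrict (Ioo (-r) r), 0 ≤ 2 * c - |t| := by
    filter_upwards [self_mem_ae_restrict measurableSet_Ioo] with t ht
    linarith [abs_lt.2 ht]
  have hint : IntegrableOn (fun t => 2 * c - |t|) (Ioo (-r) r) :=
    (continuous_const.sub continuous_abs).integrableOn_Icc.mono_set Ioo_subset_Icc_self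
  simp_rw [prod_restrict_strip measurableSet_Ioo, overlap_Ioo,
    ← ofReal_integral_eq_lintegral_ofReal hint hpos, ← integral_Ioc_eq_integral_Ioo,
    ← intervalIntegral.integral_of_le (neg_le_self hr),
    intervalIntegral.integral_sub intervalIntegrable_const (continuous_abs.intervalIntegrable _ _),
    integral_abs_symm r hr, intervalIntegral.integral_const, smul_eq_mul]
  ring_nf

theorem prod_restrict_strip_le_Ioo {A B : Set ℝ} (hB : MeasurableSet B)
    (hA_bdd : Bornology.IsBounded A) (hB_bdd : Bornology.IsBounded B) {c r : ℝ} (hr : 0 ≤ r)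
    (hA_vol : volume A = .ofReal (2 * c)) (hB_vol : volume B = .ofReal (2 * c)) :
    (volume.restrict A).prod (volume.restrict B) (strip r) ≤
      (volume.restrict (Ioo (-c) c)).prod (volume.restrict (Ioo (-c) c)) (strip r) := by
  rcases le_or_gt r (2 * c) with hrc | hrc
  · rw [prod_restrict_Ioo_strip hr hrc]
    exact prod_restrict_strip_le hB hA_bdd hB_bdd hr hrc hA_vol hB_vol
  · have hsquare : Ioo (-c) c ×ˢ Ioo (-c) c ⊆ strip r := fun p ⟨h₁, h₂⟩ => by
      simp only [strip, mem_ofPred_eq, abs_lt]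
      constructor <;> linarith [h₁.1, h₁.2, h₂.1, h₂.2]
    calc (volume.restrict A).prod (volume.restrict B) (strip r)
        ≤ (volume.restrict A).prod (volume.restrict B) univ := measure_mono (subset_univ _)
      _ = (volume.restrict (Ioo (-c) c)).prod (volume.restrict (Ioo (-c) c)) (strip r) := by
        rw [Measure.prod_restrict, Measure.prod_restrict, Measure.restrict_apply MeasurableSet.univ,
          Measure.restrict_apply (measurableSet_strip r), univ_inter,
          inter_eq_right.2 hsquare, Measure.prod_prod, Measure.prod_prod, hA_vol, hB_vol,
          Real.volume_Ioo, sub_neg_eq_add, two_mul]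

theorem stmt_15_general {Ω : Type*} {mΩ : MeasurableSpace Ω} (P : Measure Ω)
    [IsProbabilityMeasure P] (b N μ : ℝ)
    (hμ : 0 < μ) (B₀ B₁ : Set ℝ) (hB₁ : MeasurableSet B₁)
    (hB₀sub : B₀ ⊆ Set.Icc (-N) N) (hB₁sub : B₁ ⊆ Set.Icc (-N) N)
    (hB₀vol : volume B₀ = ENNReal.ofReal (1 / b))
    (hB₁vol : volume B₁ = ENNReal.ofReal (1 / b))
    (Y₀ Y₁ U₀ U₁ : Ω → ℝ)
    (hY₀ : Measurable Y₀) (hY₁ : Measurable Y₁)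
    (hU₀ : Measurable U₀) (hU₁ : Measurable U₁)
    (hYindep : IndepFun Y₀ Y₁ P) (hUindep : IndepFun U₀ U₁ P)
    (hY₀law : P.map Y₀ = ENNReal.ofReal b • volume.restrict B₀)
    (hY₁law : P.map Y₁ = ENNReal.ofReal b • volume.restrict B₁)
    (hU₀law : P.map U₀ = ENNReal.ofReal b •
      volume.restrict (Set.Ioo (-(1 / (2 * b))) (1 / (2 * b))))
    (hU₁law : P.map U₁ = ENNReal.ofReal b •
      volume.restrict (Set.Ioo (-(1 / (2 * b))) (1 / (2 * b)))) :
    P {ω | |Y₀ ω - Y₁ ω| < μ} ≤ P {ω | |U₀ ω - U₁ ω| < μ} := by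
  have hlength : 1 / b = 2 * (1 / (2 * b)) := by ring
  have hB_bdd {B : Set ℝ} (hB : B ⊆ Icc (-N) N) : Bornology.IsBounded B :=
    Metric.isBounded_Icc (-N) N |>.subset hB
  rw [hYindep.measure_abs_sub_lt hY₀ hY₁, hUindep.measure_abs_sub_lt hU₀ hU₁, hY₀law, hY₁law,
    hU₀law, hU₁law]
  simp only [Measure.prod_smul_left, Measure.prod_smul_right, Measure.smul_apply, smul_eq_mul]
  gcongr _ * (_ * ?_)
  exact prod_restrict_strip_le_Ioo hB₁ (hB_bdd hB₀sub) (hB_bdd hB₁sub) hμ.le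
    (hlength ▸ hB₀vol) (hlength ▸ hB₁vol)

theorem stmt_15 {Ω : Type*} {mΩ : MeasurableSpace Ω} (P : Measure Ω)
    [IsProbabilityMeasure P] (b N μ : ℝ) (hb : 0 < b) (hN : 1 / (2 * b) ≤ N)
    (hμ : 0 < μ) (B₀ B₁ : Set ℝ) (hB₀ : MeasurableSet B₀) (hB₁ : MeasurableSet B₁)
    (hB₀sub : B₀ ⊆ Set.Icc (-N) N) (hB₁sub : B₁ ⊆ Set.Icc (-N) N)
    (hB₀symm : B₀ = -B₀) (hB₁symm : B₁ = -B₁)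
    (hB₀vol : volume B₀ = ENNReal.ofReal (1 / b))
    (hB₁vol : volume B₁ = ENNReal.ofReal (1 / b))
    (Y₀ Y₁ U₀ U₁ : Ω → ℝ)
    (hY₀ : Measurable Y₀) (hY₁ : Measurable Y₁)
    (hU₀ : Measurable U₀) (hU₁ : Measurable U₁)
    (hYindep : IndepFun Y₀ Y₁ P) (hUindep : IndepFun U₀ U₁ P)
    (hY₀law : P.map Y₀ = ENNReal.ofReal b • volume.restrict B₀)
    (hY₁law : P.map Y₁ = ENNReal.ofReal b • volume.restrict B₁)
    (hU₀law : P.map U₀ = ENNReal.ofReal b •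
      volume.restrict (Set.Ioo (-(1 / (2 * b))) (1 / (2 * b))))
    (hU₁law : P.map U₁ = ENNReal.ofReal b •
      volume.restrict (Set.Ioo (-(1 / (2 * b))) (1 / (2 * b)))) :
    P {ω | |Y₀ ω - Y₁ ω| < μ} ≤ P {ω | |U₀ ω - U₁ ω| < μ} :=
  stmt_15_general (mΩ := mΩ) P b N μ hμ B₀ B₁ hB₁ hB₀sub hB₁sub hB₀vol hB₁vol Y₀ Y₁ U₀ U₁ hY₀ hY₁
    hU₀ hU₁ hYindep hUindep hY₀law hY₁law hU₀law hU₁law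
end

section
/- Fix b > 0, N ≥ 1/(2b), and μ > 0. Let X and Y be independent random variables whose distributions are symmetric, supported on [−N, N], and have distribution functions Lipschitz with constant b; let U₀ and U₁ be independent random variables each uniformly distributed on (−1/(2b), 1/(2b)). If bμ < 1 then P(X ≤ Y + μ) ≤ P(U₀ ≤ U₁ + μ) = bμ + (1/2)(1 − (bμ)²). If bμ ≥ 1 then P(U₀ ≤ U₁ + μ) = 1. -/
/-!
Write `F`, `G` for the distribution functions of `X`, `Y` and `t = bμ`. By symmetry
`P(X < Y - μ) = P(Y < X - μ)`, so twice this probability is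
`∫ F(y - μ) dG(y) + ∫ G(x - μ) dF(x)`, and the Lipschitz bound gives `F(y - μ) ≥ (F(y) - t)⁺`.
On a short interval the product `(F - t)⁺ (G - t)⁺` grows by at most
`∫ (F - t)⁺ dG + ∫ (G - t)⁺ dF` plus a cross term `ΔF ΔG`, which is negligible because `F` is
uniformly continuous; as the product rises from `0` to `(1 - t)²`, we get
`P(Y < X - μ) ≥ (1 - t)² / 2`, and this is exactly the value for the uniform pair.
-/

open MeasureTheory ProbabilityTheory

open Filter Topology Set
open scoped NNReal

lemma posPart_sub_mul_posPart_sub_sub_le {x x' y y' : ℝ} (t : ℝ) (hx : x ≤ x') (hy : y ≤ y') :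
    (x' - t)⁺ * (y' - t)⁺ - (x - t)⁺ * (y - t)⁺ ≤
      (x - t)⁺ * (y' - y) + (y - t)⁺ * (x' - x) + (x' - x) * (y' - y) := by
  have hx' : (x' - t)⁺ ≤ (x - t)⁺ + (x' - x) :=
    sup_le (by linarith [le_posPart (x - t)]) (by linarith [posPart_nonneg (x - t)])
  have hy' : (y' - t)⁺ ≤ (y - t)⁺ + (y' - y) :=
    sup_le (by linarith [le_posPart (y - t)]) (by linarith [posPart_nonneg (y - t)])
  nlinarith [mul_le_mul hx' hy' (posPart_nonneg _) (by linarith [posPart_nonneg (x - t)])]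

lemma rel_of_local_of_trans {R : ℝ → ℝ → Prop} {δ : ℝ} (hδ : 0 < δ)
    (hstep : ∀ u v, u ≤ v → v ≤ u + δ → R u v)
    (htrans : ∀ u v w, u ≤ v → v ≤ w → R u v → R v w → R u w) {a c : ℝ} (hac : a ≤ c) :
    R a c := by
  have hchain : ∀ n : ℕ, ∀ v, a ≤ v → v ≤ a + n * δ → R a v := by
    intro n
    induction n with
    | zero =>
      intro v hav hva
      rw [Nat.cast_zero, zero_mul, add_zero] at hva
      exact hstep a v hav (by linarith)
    | succ n ih =>
      intro v hav hva
      by_cases hv : v ≤ a + n * δ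
      · exact ih v hav hv
      · have hn : a ≤ a + n * δ := le_add_of_nonneg_right (by positivity)
        push_cast at hva
        exact htrans a _ v hn (by linarith) (ih _ hn le_rfl)
          (hstep _ v (by linarith) (by linarith))
  obtain ⟨n, hn⟩ := exists_nat_ge ((c - a) / δ)
  exact hchain n c hac (by rw [div_le_iff₀ hδ] at hn; linarith)

lemma monotone_posPart_cdf_sub (ν : Measure ℝ) (t : ℝ) : Monotone fun x => (cdf ν x - t)⁺ :=
  fun _ _ h => posPart_mono (sub_le_sub_right (monotone_cdf ν h) t)

lemma integrable_posPart_cdf_sub (ν m : Measure ℝ) [IsProbabilityMeasure ν] [IsFiniteMeasure m]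
    {t : ℝ} (ht : 0 ≤ t) : Integrable (fun x => (cdf ν x - t)⁺) m :=
  .of_bound (monotone_posPart_cdf_sub ν t).measurable.aestronglyMeasurable 1
    (ae_of_all _ fun x => by
      rw [Real.norm_of_nonneg (posPart_nonneg _)]
      exact sup_le (by linarith [cdf_le_one ν x]) zero_le_one)

lemma integrable_cdf_sub_const (ρ m : Measure ℝ) [IsProbabilityMeasure ρ] [IsFiniteMeasure m]
    (μ : ℝ) : Integrable (fun x => cdf ρ (x - μ)) m :=
  .of_bound ((monotone_cdf ρ).measurable.comp (measurable_id.sub_const μ)).aestronglyMeasurable 1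
    (ae_of_all _ fun x => by
      rw [Real.norm_of_nonneg (cdf_nonneg ρ _)]
      exact cdf_le_one ρ _)

lemma posPart_cdf_sub_le_cdf_sub {ρ : Measure ℝ} {K : ℝ≥0} (hρ : LipschitzWith K (cdf ρ))
    {μ : ℝ} (hμ : 0 ≤ μ) (x : ℝ) : (cdf ρ x - K * μ)⁺ ≤ cdf ρ (x - μ) := by
  refine sup_le ?_ (cdf_nonneg ρ _)
  have := hρ.dist_le_mul x (x - μ)
  rw [Real.dist_eq, Real.dist_eq, sub_sub_cancel, abs_of_nonneg hμ] at this
  linarith [le_abs_self (cdf ρ x - cdf ρ (x - μ))]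

lemma prod_lt_sub_eq_lintegral (ν ρ : Measure ℝ) [SFinite ρ] (μ : ℝ) :
    (ν.prod ρ) {p : ℝ × ℝ | p.2 < p.1 - μ} = ∫⁻ x, ρ (Iio (x - μ)) ∂ν :=
  Measure.prod_apply (measurableSet_lt measurable_snd (measurable_fst.sub_const μ))

lemma measure_singleton_eq_zero_of_continuous_cdf {ν : Measure ℝ} [IsProbabilityMeasure ν]
    (h : Continuous (cdf ν)) (a : ℝ) : ν {a} = 0 := by
  rw [← measure_cdf ν, StieltjesFunction.measure_singleton,
    ((monotone_cdf ν).continuousWithinAt_Iio_iff_leftLim_eq).1 h.continuousWithinAt, sub_self,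
    ENNReal.ofReal_zero]

lemma cdf_sub_cdf_eq_measureReal_Ioc {ρ : Measure ℝ} [IsProbabilityMeasure ρ] {u v : ℝ}
    (huv : u ≤ v) : cdf ρ v - cdf ρ u = ρ.real (Ioc u v) := by
  have h := (cdf ρ).measure_Ioc u v
  rw [measure_cdf] at h
  rw [measureReal_def, h, ENNReal.toReal_ofReal (sub_nonneg.2 (monotone_cdf ρ huv))]

lemma mul_cdf_sub_le_intervalIntegral {ρ : Measure ℝ} [IsProbabilityMeasure ρ] {f : ℝ → ℝ}
    (hf : Monotone f) {u v : ℝ} (huv : u ≤ v) :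
    f u * (cdf ρ v - cdf ρ u) ≤ ∫ x in u..v, f x ∂ρ := by
  rw [intervalIntegral.integral_of_le huv, cdf_sub_cdf_eq_measureReal_Ioc huv, mul_comm,
    ← smul_eq_mul, ← setIntegral_const]
  exact setIntegral_mono_on (integrable_const _).integrableOn
    (hf.intervalIntegrable (μ := ρ) (a := u) (b := v)).1 measurableSet_Ioc
    fun x hx => hf hx.1.le

lemma toReal_prod_lt_sub_eq_integral_cdf {ν ρ : Measure ℝ} [IsProbabilityMeasure ρ]
    (hρ : Continuous (cdf ρ)) (μ : ℝ) :
    ((ν.prod ρ) {p : ℝ × ℝ | p.2 < p.1 - μ}).toReal = ∫ x, cdf ρ (x - μ) ∂ν := by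
  have hmeas : Measurable fun x => cdf ρ (x - μ) :=
    (monotone_cdf ρ).measurable.comp (measurable_id.sub_const μ)
  rw [prod_lt_sub_eq_lintegral, integral_eq_lintegral_of_nonneg_ae
    (ae_of_all _ fun _ => cdf_nonneg ρ _) hmeas.aestronglyMeasurable]
  congr 1
  refine lintegral_congr fun x => ?_
  rw [ofReal_cdf,
    measure_congr (Iio_ae_eq_Iic' (measure_singleton_eq_zero_of_continuous_cdf hρ _))]

section ProbabilityMeasure

variable {ν ρ : Measure ℝ} [IsProbabilityMeasure ν] [IsProbabilityMeasure ρ]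

lemma posPart_cdf_mul_sub_le_intervalIntegral (hν : UniformContinuous (cdf ν)) (t : ℝ)
    {a c : ℝ} (hac : a ≤ c) :
    (cdf ν c - t)⁺ * (cdf ρ c - t)⁺ - (cdf ν a - t)⁺ * (cdf ρ a - t)⁺ ≤
      (∫ x in a..c, (cdf ν x - t)⁺ ∂ρ) + ∫ x in a..c, (cdf ρ x - t)⁺ ∂ν := by
  set φ : ℝ → ℝ := fun x => (cdf ν x - t)⁺
  set ψ : ℝ → ℝ := fun x => (cdf ρ x - t)⁺
  have hφ : Monotone φ := monotone_posPart_cdf_sub ν t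
  have hψ : Monotone ψ := monotone_posPart_cdf_sub ρ t
  suffices h : ∀ ε > 0, φ c * ψ c - φ a * ψ a ≤
      (∫ x in a..c, φ x ∂ρ) + (∫ x in a..c, ψ x ∂ν) + ε * (cdf ρ c - cdf ρ a) by
    refine le_of_forall_pos_le_add fun ε hε => (h ε hε).trans ?_
    have hG : cdf ρ c - cdf ρ a ≤ 1 := by linarith [cdf_le_one ρ c, cdf_nonneg ρ a]
    nlinarith
  intro ε hε
  obtain ⟨η, hη, hνη⟩ := Metric.uniformContinuous_iff.1 hν ε hε
  -- on a step shorter than `η` the cross term `ΔF ΔG` is at most `ε ΔG`, and these telescope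
  refine rel_of_local_of_trans (R := fun u v => φ v * ψ v - φ u * ψ u ≤
      (∫ x in u..v, φ x ∂ρ) + (∫ x in u..v, ψ x ∂ν) + ε * (cdf ρ v - cdf ρ u))
    (half_pos hη) (fun u v huv hvu => ?_) (fun u v w _ _ huv hvw => ?_) hac
  · have hF : cdf ν v - cdf ν u ≤ ε := by
      have := hνη (a := v) (b := u) (by rw [Real.dist_eq, abs_of_nonneg (by linarith)]; linarith)
      rw [Real.dist_eq] at this
      exact (le_abs_self _).trans this.le
    have hG : 0 ≤ cdf ρ v - cdf ρ u := sub_nonneg.2 (monotone_cdf ρ huv)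
    have := posPart_sub_mul_posPart_sub_sub_le t (monotone_cdf ν huv) (monotone_cdf ρ huv)
    nlinarith [mul_cdf_sub_le_intervalIntegral (ρ := ρ) hφ huv,
      mul_cdf_sub_le_intervalIntegral (ρ := ν) hψ huv, mul_le_mul_of_nonneg_right hF hG]
  · rw [← intervalIntegral.integral_add_adjacent_intervals hφ.intervalIntegrable
        hφ.intervalIntegrable,
      ← intervalIntegral.integral_add_adjacent_intervals hψ.intervalIntegrable
        hψ.intervalIntegrable]
    linarith

lemma sq_one_sub_le_integral_posPart_cdf_sub (hν : UniformContinuous (cdf ν)) {t : ℝ}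
    (ht₀ : 0 ≤ t) (ht₁ : t ≤ 1) :
    (1 - t) ^ 2 ≤ (∫ x, (cdf ν x - t)⁺ ∂ρ) + ∫ x, (cdf ρ x - t)⁺ ∂ν := by
  set g : ℝ → ℝ := fun x => (cdf ν x - t)⁺ * (cdf ρ x - t)⁺
  have hlim : ∀ l : Filter ℝ, ∀ p : ℝ, Tendsto (cdf ν) l (𝓝 p) → Tendsto (cdf ρ) l (𝓝 p) →
      Tendsto g l (𝓝 ((p - t)⁺ * (p - t)⁺)) := fun l p hF hG =>
    ((continuous_posPart.tendsto _).comp (hF.sub_const t)).mul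
      ((continuous_posPart.tendsto _).comp (hG.sub_const t))
  have htop := hlim atTop 1 (tendsto_cdf_atTop ν) (tendsto_cdf_atTop ρ)
  have hbot := hlim atBot 0 (tendsto_cdf_atBot ν) (tendsto_cdf_atBot ρ)
  rw [posPart_eq_self.2 (sub_nonneg.2 ht₁), ← sq] at htop
  rw [posPart_eq_zero.2 (by linarith), mul_zero] at hbot
  have hincr : ∀ a c, a ≤ c → g c - g a ≤
      (∫ x, (cdf ν x - t)⁺ ∂ρ) + ∫ x, (cdf ρ x - t)⁺ ∂ν := by
    intro a c hac
    refine (posPart_cdf_mul_sub_le_intervalIntegral hν t hac).trans (add_le_add ?_ ?_) <;>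
    · rw [intervalIntegral.integral_of_le hac]
      exact setIntegral_le_integral (integrable_posPart_cdf_sub _ _ ht₀)
        (ae_of_all _ fun _ => posPart_nonneg _)
  have hbound : ∀ a, (1 - t) ^ 2 - g a ≤
      (∫ x, (cdf ν x - t)⁺ ∂ρ) + ∫ x, (cdf ρ x - t)⁺ ∂ν := fun a =>
    le_of_tendsto (htop.sub_const _) ((eventually_ge_atTop a).mono fun c hc => hincr a c hc)
  simpa using le_of_tendsto' (hbot.const_sub ((1 - t) ^ 2)) hbound

lemma SymmetricDist.prod_lt_sub_comm (hν : SymmetricDist ν) (hρ : SymmetricDist ρ) (μ : ℝ) :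
    (ν.prod ρ) {p : ℝ × ℝ | p.2 < p.1 - μ} = (ρ.prod ν) {p : ℝ × ℝ | p.2 < p.1 - μ} := by
  have hmap : (ν.prod ρ).map (fun p => (-p.2, -p.1)) = ρ.prod ν := by
    rw [show (fun p : ℝ × ℝ => (-p.2, -p.1)) = Prod.swap ∘ Prod.map (-·) (-·) from rfl,
      ← Measure.map_map measurable_swap (measurable_neg.prodMap measurable_neg),
      ← Measure.map_prod_map _ _ measurable_neg measurable_neg, hν, hρ, Measure.prod_swap]
  rw [← hmap, Measure.map_apply (by fun_prop)
    (measurableSet_lt measurable_snd (measurable_fst.sub_const μ))]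
  congr 1
  ext p
  show p.2 < p.1 - μ ↔ -p.1 < -p.2 - μ
  constructor <;> intro h <;> linarith

lemma ofReal_le_prod_lt_sub {K : ℝ≥0} (hνs : SymmetricDist ν) (hρs : SymmetricDist ρ)
    (hν : LipschitzWith K (cdf ν)) (hρ : LipschitzWith K (cdf ρ)) {μ : ℝ} (hμ : 0 ≤ μ)
    (hKμ : K * μ ≤ 1) :
    ENNReal.ofReal ((1 - K * μ) ^ 2 / 2) ≤ (ν.prod ρ) {p : ℝ × ℝ | p.2 < p.1 - μ} := by
  have hνρ := toReal_prod_lt_sub_eq_integral_cdf (ν := ν) hρ.continuous μ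
  have hρν := toReal_prod_lt_sub_eq_integral_cdf (ν := ρ) hν.continuous μ
  rw [← hνs.prod_lt_sub_comm hρs] at hρν
  have hF := integral_mono (integrable_posPart_cdf_sub ν ρ (by positivity))
    (integrable_cdf_sub_const ν ρ μ) (posPart_cdf_sub_le_cdf_sub hν hμ)
  have hG := integral_mono (integrable_posPart_cdf_sub ρ ν (by positivity))
    (integrable_cdf_sub_const ρ ν μ) (posPart_cdf_sub_le_cdf_sub hρ hμ)
  have key := sq_one_sub_le_integral_posPart_cdf_sub (ρ := ρ) hν.uniformContinuous
    (by positivity) hKμ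
  exact ENNReal.ofReal_le_of_le_toReal (by linarith)

end ProbabilityMeasure

lemma setLIntegral_Ioc_ofReal_sub {a s c : ℝ} (has : a ≤ s) (hsc : s ≤ c) :
    ∫⁻ x in Ioc a c, ENNReal.ofReal (x - s) = ENNReal.ofReal ((c - s) ^ 2 / 2) := by
  rw [← Ioc_union_Ioc_eq_Ioc has hsc, lintegral_union measurableSet_Ioc
      (Ioc_disjoint_Ioc_of_le le_rfl),
    setLIntegral_congr_fun measurableSet_Ioc
      (fun x hx => ENNReal.ofReal_of_nonpos (sub_nonpos.2 hx.2)),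
    lintegral_zero, zero_add,
    ← ofReal_integral_eq_lintegral_ofReal (f := fun x => x - s)
      ((continuous_id.sub continuous_const).integrableOn_Icc.mono_set Ioc_subset_Icc_self)
      (ae_restrict_of_forall_mem measurableSet_Ioc fun x hx => sub_nonneg.2 hx.1.le),
    ← intervalIntegral.integral_of_le hsc, intervalIntegral.integral_comp_sub_right
      (fun x => x), sub_self, integral_id]
  congr 1
  ring

lemma smul_restrict_Ioo_apply_Iio {b a c s : ℝ} (hs : s ≤ c) :
    (ENNReal.ofReal b • volume.restrict (Ioo a c)) (Iio s) =
      ENNReal.ofReal b * ENNReal.ofReal (s - a) := by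
  rw [Measure.smul_apply, Measure.restrict_apply measurableSet_Iio, smul_eq_mul,
    Iio_inter_Ioo, min_eq_left hs, Real.volume_Ioo]

lemma uniform_prod_lt_sub {b μ : ℝ} (hb : 0 < b) (hμ : 0 ≤ μ) (hbμ : b * μ ≤ 1) {U : Measure ℝ}
    (hU : U = ENNReal.ofReal b • volume.restrict (Ioo (-(1 / (2 * b))) (1 / (2 * b)))) :
    (U.prod U) {p : ℝ × ℝ | p.2 < p.1 - μ} = ENNReal.ofReal ((1 - b * μ) ^ 2 / 2) := by
  subst hU
  set w := 1 / (2 * b) with hw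
  have hbw : b * w = 1 / 2 := by rw [hw]; field_simp
  have hμw : μ - w ≤ w := by nlinarith
  rw [prod_lt_sub_eq_lintegral, lintegral_smul_measure,
    setLIntegral_congr_fun measurableSet_Ioo
      fun x hx => smul_restrict_Ioo_apply_Iio (by linarith [hx.2]),
    Measure.restrict_congr_set Ioo_ae_eq_Ioc,
    lintegral_const_mul' _ _ ENNReal.ofReal_ne_top]
  simp_rw [show ∀ x, x - μ - -w = x - (μ - w) from fun x => by ring]
  rw [setLIntegral_Ioc_ofReal_sub (by linarith) hμw, smul_eq_mul, ← mul_assoc,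
    ← ENNReal.ofReal_mul hb.le, ← ENNReal.ofReal_mul (by positivity)]
  congr 1
  nlinarith

lemma ProbabilityTheory.IndepFun.measure_le_add_eq_one_sub {Ω : Type*} {mΩ : MeasurableSpace Ω}
    {P : Measure Ω} [IsProbabilityMeasure P] {X Y : Ω → ℝ} (hXY : IndepFun X Y P)
    (hX : Measurable X) (hY : Measurable Y) (μ : ℝ) :
    P {ω | X ω ≤ Y ω + μ} = 1 - ((P.map X).prod (P.map Y)) {p : ℝ × ℝ | p.2 < p.1 - μ} := by
  have hS : MeasurableSet {p : ℝ × ℝ | p.2 < p.1 - μ} :=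
    measurableSet_lt measurable_snd (measurable_fst.sub_const μ)
  have hcompl : {ω | X ω ≤ Y ω + μ} = ((fun ω => (X ω, Y ω)) ⁻¹' {p | p.2 < p.1 - μ})ᶜ := by
    ext ω
    show X ω ≤ Y ω + μ ↔ ¬ Y ω < X ω - μ
    rw [not_lt]
    constructor <;> intro h <;> linarith
  rw [hcompl, prob_compl_eq_one_sub (hS.preimage (hX.prodMk hY)),
    ← Measure.map_apply (hX.prodMk hY) hS,
    (indepFun_iff_map_prod_eq_prod_map_map hX.aemeasurable hY.aemeasurable).1 hXY]

theorem stmt_16_general {Ω : Type*} {mΩ : MeasurableSpace Ω} (P : Measure Ω)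
    [IsProbabilityMeasure P] (b μ : ℝ) (hb : 0 < b)
    (hμ : 0 < μ) (X Y U₀ U₁ : Ω → ℝ)
    (hX : Measurable X) (hY : Measurable Y)
    (hU₀ : Measurable U₀) (hU₁ : Measurable U₁)
    (hXYindep : IndepFun X Y P) (hUindep : IndepFun U₀ U₁ P)
    (hXsymm : SymmetricDist (P.map X)) (hYsymm : SymmetricDist (P.map Y))
    (hXlip : LipschitzWith (Real.toNNReal b) (fun x => ((P.map X) (Set.Iic x)).toReal))
    (hYlip : LipschitzWith (Real.toNNReal b) (fun x => ((P.map Y) (Set.Iic x)).toReal))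
    (hU₀law : P.map U₀ = ENNReal.ofReal b •
      volume.restrict (Set.Ioo (-(1 / (2 * b))) (1 / (2 * b))))
    (hU₁law : P.map U₁ = ENNReal.ofReal b •
      volume.restrict (Set.Ioo (-(1 / (2 * b))) (1 / (2 * b)))) :
    (b * μ < 1 →
      P {ω | X ω ≤ Y ω + μ} ≤ P {ω | U₀ ω ≤ U₁ ω + μ} ∧
      (P {ω | U₀ ω ≤ U₁ ω + μ}).toReal = b * μ + (1 / 2) * (1 - (b * μ) ^ 2)) ∧
    (1 ≤ b * μ → (P {ω | U₀ ω ≤ U₁ ω + μ}).toReal = 1) := by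
  have := Measure.isProbabilityMeasure_map (μ := P) hX.aemeasurable
  have := Measure.isProbabilityMeasure_map (μ := P) hY.aemeasurable
  have hcdf : ∀ ν : Measure ℝ, [IsProbabilityMeasure ν] → cdf ν = fun x => (ν (Iic x)).toReal :=
    fun ν _ => funext fun x => cdf_eq_real ν x
  rw [← hcdf] at hXlip hYlip
  have hbK : (b.toNNReal : ℝ) = b := Real.coe_toNNReal b hb.le
  have hU : ∀ μ', 0 ≤ μ' → b * μ' ≤ 1 →
      P {ω | U₀ ω ≤ U₁ ω + μ'} = 1 - ENNReal.ofReal ((1 - b * μ') ^ 2 / 2) := fun μ' h₀ h₁ => by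
    rw [hUindep.measure_le_add_eq_one_sub hU₀ hU₁, hU₁law, ← hU₀law,
      uniform_prod_lt_sub hb h₀ h₁ hU₀law]
  refine ⟨fun hbμ => ⟨?_, ?_⟩, fun hbμ => ?_⟩
  · rw [hU μ hμ.le hbμ.le, hXYindep.measure_le_add_eq_one_sub hX hY]
    refine tsub_le_tsub_left ?_ 1
    simpa only [hbK] using
      ofReal_le_prod_lt_sub hXsymm hYsymm hXlip hYlip hμ.le (by rw [hbK]; exact hbμ.le)
  · rw [hU μ hμ.le hbμ.le, ENNReal.toReal_sub_of_le
      (ENNReal.ofReal_le_one.2 (by nlinarith [mul_pos hb hμ])) ENNReal.one_ne_top,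
      ENNReal.toReal_ofReal (by positivity), ENNReal.toReal_one]
    ring
  · have hsub : {ω | U₀ ω ≤ U₁ ω + 1 / b} ⊆ {ω | U₀ ω ≤ U₁ ω + μ} :=
      ofPred_subset_ofPred.2 fun ω h =>
        h.trans (by gcongr; exact (div_le_iff₀ hb).2 (by linarith))
    have hfull : P {ω | U₀ ω ≤ U₁ ω + 1 / b} = 1 := by
      rw [hU (1 / b) (by positivity) (by rw [mul_one_div_cancel hb.ne']),
        mul_one_div_cancel hb.ne']
      norm_num
    rw [le_antisymm prob_le_one (hfull ▸ measure_mono hsub), ENNReal.toReal_one]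

theorem stmt_16 {Ω : Type*} {mΩ : MeasurableSpace Ω} (P : Measure Ω)
    [IsProbabilityMeasure P] (b N μ : ℝ) (hb : 0 < b) (hN : 1 / (2 * b) ≤ N)
    (hμ : 0 < μ) (X Y U₀ U₁ : Ω → ℝ)
    (hX : Measurable X) (hY : Measurable Y)
    (hU₀ : Measurable U₀) (hU₁ : Measurable U₁)
    (hXYindep : IndepFun X Y P) (hUindep : IndepFun U₀ U₁ P)
    (hXsymm : SymmetricDist (P.map X)) (hYsymm : SymmetricDist (P.map Y))
    (hXsupp : (P.map X) (Set.Icc (-N) N)ᶜ = 0)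
    (hYsupp : (P.map Y) (Set.Icc (-N) N)ᶜ = 0)
    (hXlip : LipschitzWith (Real.toNNReal b) (fun x => ((P.map X) (Set.Iic x)).toReal))
    (hYlip : LipschitzWith (Real.toNNReal b) (fun x => ((P.map Y) (Set.Iic x)).toReal))
    (hU₀law : P.map U₀ = ENNReal.ofReal b •
      volume.restrict (Set.Ioo (-(1 / (2 * b))) (1 / (2 * b))))
    (hU₁law : P.map U₁ = ENNReal.ofReal b •
      volume.restrict (Set.Ioo (-(1 / (2 * b))) (1 / (2 * b)))) :
    (b * μ < 1 →
      P {ω | X ω ≤ Y ω + μ} ≤ P {ω | U₀ ω ≤ U₁ ω + μ} ∧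
      (P {ω | U₀ ω ≤ U₁ ω + μ}).toReal = b * μ + (1 / 2) * (1 - (b * μ) ^ 2)) ∧
    (1 ≤ b * μ → (P {ω | U₀ ω ≤ U₁ ω + μ}).toReal = 1) :=
  stmt_16_general (mΩ := mΩ) P b μ hb hμ X Y U₀ U₁ hX hY hU₀ hU₁ hXYindep hUindep hXsymm hYsymm
    hXlip hYlip hU₀law hU₁law
end

section
/- Let X₀ and X₁ be independent real random variables with continuous distribution functions F₀ and F₁. For 0 < α < 1 define x(α) = sup{x : 1 − F₀(x) ≥ α}. Then the area under the ROC curve, AUC = ∫₀¹ (1 − F₁(x(α))) dα, satisfies AUC = P(X₀ ≤ X₁). -/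
/-!
For `0 < α < 1`, continuity of `F₀` gives `x(α) < t ↔ 1 - F₀ t < α`, so
`1 - F₁ (x α) = P(U < α)` with `U = 1 - F₀ (X₁)`. Integrating over `α` (Tonelli) turns the AUC
into `E[1 - U] = E[F₀ (X₁)]`, and by independence `E[F₀ (X₁)] = P(X₀ ≤ X₁)`.
-/

open MeasureTheory ProbabilityTheory Set Filter

theorem Monotone.csSup_setOf_le_lt_iff {α β : Type*} [ConditionallyCompleteLinearOrder α]
    [TopologicalSpace α] [OrderTopology α] [LinearOrder β] [TopologicalSpace β]
    [OrderClosedTopology β] {F : α → β} (hmono : Monotone F) (hcont : Continuous F) {b : β}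
    (hne : {x | F x ≤ b}.Nonempty) (hbdd : BddAbove {x | F x ≤ b}) (t : α) :
    sSup {x | F x ≤ b} < t ↔ b < F t := by
  have hmem : F (sSup {x | F x ≤ b}) ≤ b :=
    (isClosed_le hcont continuous_const).csSup_mem hne hbdd
  refine ⟨fun h => ?_, fun h => hmono.reflect_lt (hmem.trans_lt h)⟩
  by_contra! ht
  exact (le_csSup hbdd ht).not_gt h

theorem sSup_setOf_le_one_sub_cdf_lt_iff (μ : Measure ℝ) [IsProbabilityMeasure μ]
    (hcont : Continuous (cdf μ)) {α : ℝ} (hα : α ∈ Ioo 0 1) (t : ℝ) :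
    sSup {x | α ≤ 1 - cdf μ x} < t ↔ 1 - cdf μ t < α := by
  simp only [le_sub_comm (a := α), sub_lt_comm (a := (1 : ℝ))]
  refine (monotone_cdf μ).csSup_setOf_le_lt_iff hcont ?_ ?_ t
  · obtain ⟨x, hx⟩ := ((tendsto_cdf_atBot μ).eventually_lt_const (sub_pos.2 hα.2)).exists
    exact ⟨x, hx.le⟩
  · obtain ⟨x₀, hx₀⟩ := eventually_atTop.1
      ((tendsto_cdf_atTop μ).eventually_const_lt (sub_lt_self 1 hα.1))
    exact ⟨x₀, fun x hx => not_lt.1 fun hlt => (hx₀ x hlt.le).not_ge hx⟩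

theorem cdf_map_eq_measureReal {Ω : Type*} {mΩ : MeasurableSpace Ω} (P : Measure Ω)
    [IsProbabilityMeasure P] {X : Ω → ℝ} (hX : Measurable X) (x : ℝ) :
    cdf (P.map X) x = P.real {ω | X ω ≤ x} := by
  have := Measure.isProbabilityMeasure_map (μ := P) hX.aemeasurable
  rw [cdf_eq_real, map_measureReal_apply hX measurableSet_Iic]
  rfl

theorem setLIntegral_Ioo_zero_one_measure_lt {Ω : Type*} {mΩ : MeasurableSpace Ω}
    (P : Measure Ω) [SFinite P] {U : Ω → ℝ} (hU : Measurable U) (hU₀ : ∀ ω, 0 ≤ U ω) :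
    ∫⁻ α in Ioo 0 1, P {ω | U ω < α} = ∫⁻ ω, ENNReal.ofReal (1 - U ω) ∂P := by
  have hS : MeasurableSet {p : ℝ × Ω | U p.2 < p.1} :=
    measurableSet_lt (hU.comp measurable_snd) measurable_fst
  have hslice (ω : Ω) : Ioi (U ω) ∩ Ioo 0 1 = Ioo (U ω) 1 := by
    ext α
    simp only [mem_inter_iff, mem_Ioi, mem_Ioo]
    exact ⟨fun h => ⟨h.1, h.2.2⟩, fun h => ⟨h.1, (hU₀ ω).trans_lt h.1, h.2⟩⟩
  calc ∫⁻ α in Ioo 0 1, P {ω | U ω < α}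
      = ((volume.restrict (Ioo 0 1)).prod P) {p | U p.2 < p.1} := (Measure.prod_apply hS).symm
    _ = ∫⁻ ω, volume.restrict (Ioo 0 1) (Ioi (U ω)) ∂P := Measure.prod_apply_symm hS
    _ = ∫⁻ ω, ENNReal.ofReal (1 - U ω) ∂P := by
      simp only [Measure.restrict_apply measurableSet_Ioi, hslice, Real.volume_Ioo]

theorem ProbabilityTheory.IndepFun.measure_le_eq_lintegral_cdf {Ω : Type*}
    {mΩ : MeasurableSpace Ω} {P : Measure Ω} [IsProbabilityMeasure P] {X Y : Ω → ℝ}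
    (hX : Measurable X) (hY : Measurable Y) (hXY : IndepFun X Y P) :
    P {ω | X ω ≤ Y ω} = ∫⁻ ω, ENNReal.ofReal (cdf (P.map X) (Y ω)) ∂P := by
  have := Measure.isProbabilityMeasure_map (μ := P) hX.aemeasurable
  have hle : MeasurableSet {p : ℝ × ℝ | p.1 ≤ p.2} :=
    measurableSet_le measurable_fst measurable_snd
  calc P {ω | X ω ≤ Y ω} = (P.map fun ω => (X ω, Y ω)) {p | p.1 ≤ p.2} :=
        (Measure.map_apply (hX.prodMk hY) hle).symm
    _ = ((P.map X).prod (P.map Y)) {p | p.1 ≤ p.2} := by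
        rw [(indepFun_iff_map_prod_eq_prod_map_map hX.aemeasurable hY.aemeasurable).1 hXY]
    _ = ∫⁻ y, P.map X (Iic y) ∂(P.map Y) := Measure.prod_apply_symm hle
    _ = ∫⁻ ω, ENNReal.ofReal (cdf (P.map X) (Y ω)) ∂P := by
        rw [← lintegral_map (monotone_cdf _).measurable.ennreal_ofReal hY]
        simp only [ofReal_cdf]

theorem stmt_18_general {Ω : Type*} {mΩ : MeasurableSpace Ω} (P : Measure Ω)
    [IsProbabilityMeasure P] (X₀ X₁ : Ω → ℝ)
    (hX₀ : Measurable X₀) (hX₁ : Measurable X₁)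
    (hindep : IndepFun X₀ X₁ P)
    (F₀ F₁ : ℝ → ℝ)
    (hF₀ : ∀ x, F₀ x = (P {ω | X₀ ω ≤ x}).toReal)
    (hF₁ : ∀ x, F₁ x = (P {ω | X₁ ω ≤ x}).toReal)
    (hF₀cont : Continuous F₀)
    (xα : ℝ → ℝ) (hxα : ∀ α, xα α = sSup {x | α ≤ 1 - F₀ x}) :
    (∫ α in Set.Ioo (0 : ℝ) 1, (1 - F₁ (xα α))) =
      (P {ω | X₀ ω ≤ X₁ ω}).toReal := by
  have := Measure.isProbabilityMeasure_map (μ := P) hX₀.aemeasurable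
  obtain rfl : F₀ = cdf (P.map X₀) := funext fun x => by
    rw [hF₀, cdf_map_eq_measureReal P hX₀, measureReal_def]
  set U : Ω → ℝ := fun ω => 1 - cdf (P.map X₀) (X₁ ω)
  have hroc : ∀ α ∈ Ioo (0 : ℝ) 1, 1 - F₁ (xα α) = (P {ω | U ω < α}).toReal := by
    intro α hα
    rw [hF₁, ← measureReal_def,
      ← probReal_compl_eq_one_sub (measurableSet_le hX₁ measurable_const), measureReal_def]
    congr 2
    ext ω
    simp only [mem_compl_iff, not_le, hxα, mem_ofPred_eq, U]
    exact sSup_setOf_le_one_sub_cdf_lt_iff _ hF₀cont hα _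
  have hU : Measurable U := (measurable_const.sub (monotone_cdf _).measurable).comp hX₁
  calc ∫ α in Ioo 0 1, (1 - F₁ (xα α))
      = ∫ α in Ioo 0 1, (P {ω | U ω < α}).toReal := setIntegral_congr_fun measurableSet_Ioo hroc
    _ = (∫⁻ α in Ioo 0 1, P {ω | U ω < α}).toReal := by
      have hmono : Monotone fun α => P {ω | U ω < α} := fun a b hab =>
        measure_mono fun ω (hω : U ω < a) => hω.trans_le hab
      exact integral_toReal hmono.measurable.aemeasurable
        (ae_of_all _ fun _ => measure_lt_top _ _)
    _ = (∫⁻ ω, ENNReal.ofReal (1 - U ω) ∂P).toReal := by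
      rw [setLIntegral_Ioo_zero_one_measure_lt P hU fun ω => sub_nonneg.2 (cdf_le_one _ _)]
    _ = (P {ω | X₀ ω ≤ X₁ ω}).toReal := by
      simp only [hindep.measure_le_eq_lintegral_cdf hX₀ hX₁, U, sub_sub_cancel]

/-- Bamber's identity: the area under the ROC curve equals `P(X₀ ≤ X₁)` for
independent `X₀`, `X₁` with continuous distribution functions. -/
theorem stmt_18 {Ω : Type*} {mΩ : MeasurableSpace Ω} (P : Measure Ω)
    [IsProbabilityMeasure P] (X₀ X₁ : Ω → ℝ)
    (hX₀ : Measurable X₀) (hX₁ : Measurable X₁)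
    (hindep : IndepFun X₀ X₁ P)
    (F₀ F₁ : ℝ → ℝ)
    (hF₀ : ∀ x, F₀ x = (P {ω | X₀ ω ≤ x}).toReal)
    (hF₁ : ∀ x, F₁ x = (P {ω | X₁ ω ≤ x}).toReal)
    (hF₀cont : Continuous F₀) (hF₁cont : Continuous F₁)
    (xα : ℝ → ℝ) (hxα : ∀ α, xα α = sSup {x | α ≤ 1 - F₀ x}) :
    (∫ α in Set.Ioo (0 : ℝ) 1, (1 - F₁ (xα α))) =
      (P {ω | X₀ ω ≤ X₁ ω}).toReal :=
  stmt_18_general (mΩ := mΩ) P X₀ X₁ hX₀ hX₁ hindep F₀ F₁ hF₀ hF₁ hF₀cont xα hxα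
end
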